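/- arXiv:1804.02194 — 5 statements merged into one kernel-verified Lean document; each statement's English description precedes it below -/
import Mathlib

section
/- Let X be a Banach sequence space over a countably infinite index set I in which the canonical unit vectors (e_i)_{i∈I} form an OP-basis, let integers 1 ≤ r₁ < r₂ < ⋯ < r_N (N ≥ 2) be given, and for each 1 ≤ l ≤ N let T_l = T_{b^{(l)},φ} : X → X be a weighted pseudo-shift generated by an injective map φ : I → I with weight sequence b^{(l)} = (b_i^{(l)})_{i∈I} of nonzero scalars. Assume that each i ∈ I lies outside φ^n(I) for all sufficiently large n. Then the following are equivalent: (1) T₁^{r₁}, T₂^{r₂}, …, T_N^{r_N} are densely d-supercyclic; (2) there exists a strictly increasing sequence (n_k)_{k≥1} of positive integers such that for every i ∈ I and all 1 ≤ s < l ≤ N, ‖(∏_{v=0}^{r_l n_k−1} b^{(l)}_{φ^v(i)})^{−1} (∏_{v=1}^{r_s n_k} b^{(s)}_{ψ^v(φ^{r_l n_k}(i))}) e_{φ^{(r_l−r_s) n_k}(i)}‖ → 0 as k → ∞; (3) T₁^{r₁}, T₂^{r₂}, …, T_N^{r_N} satisfy the d-Supercyclicity Criterion. -/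
open Filter Topology
open scoped Classical

/-- The vector `(∏_{v=1}^{n} b_{ψ^v(i)}) • e_{ψ^n(i)}`, where `ψ` is the partial inverse of the
injective map `φ`, with the convention that the whole term is `0` when `ψ^n(i)` is undefined
(i.e. when `i ∉ φ^n(I)`). -/
noncomputable def backVec {I X : Type*} [AddCommGroup X] [Module ℂ X]
    (φ : I → I) (b : I → ℂ) (e : I → X) (n : ℕ) (i : I) : X :=
  if h : ∃ j, φ^[n] j = i then
    (∏ v ∈ Finset.range n, b (φ^[v] (Classical.choose h))) • e (Classical.choose h)
  else 0

/-- Continuous linear operators `T 0, …, T (N-1)` on `X` satisfy the d-Supercyclicity Criterion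
with respect to the strictly increasing sequence `(n k)` of positive integers. -/
def DSupCriterionWrt {X : Type*} [NormedAddCommGroup X] [NormedSpace ℂ X]
    {N : ℕ} (T : Fin N → X →L[ℂ] X) (n : ℕ → ℕ) : Prop :=
  ∃ (X₀ : Set X) (Xs : Fin N → Set X) (S : Fin N → ℕ → X → X),
    Dense X₀ ∧ (∀ l, Dense (Xs l)) ∧
    (∀ l i : Fin N, ∀ x ∈ Xs i,
      Tendsto (fun k => ((T l) ^ (n k)) (S i k x) - (if i = l then x else 0)) atTop (𝓝 0)) ∧
    (∀ l : Fin N, ∀ x ∈ X₀, ∀ y : Fin N → X, (∀ j, y j ∈ Xs j) →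
      Tendsto (fun k => ‖((T l) ^ (n k)) x‖ * ‖∑ j : Fin N, S j k (y j)‖) atTop (𝓝 0))

set_option linter.unusedVariables false
set_option linter.unusedSectionVars false

section lemmas
variable {X : Type*} [NormedAddCommGroup X] [NormedSpace ℂ X]
    {I : Type*}
    (J : X →L[ℂ] (I → ℂ))
    (e : I → X)
    (φ : I → I)

lemma coord_pow (b : I → ℂ) (Tl : X →L[ℂ] X)
    (hT : ∀ (x : X) (i : I), J (Tl x) i = b i * J x (φ i)) (m : ℕ) (x : X) (i : I) :
    J ((Tl ^ m) x) i = (∏ v ∈ Finset.range m, b (φ^[v] i)) * J x (φ^[m] i) := by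
  induction m generalizing x with
  | zero => simp
  | succ m ih =>
    have h1 : (Tl ^ (m+1)) x = (Tl ^ m) (Tl x) := by
      rw [pow_succ, ContinuousLinearMap.mul_apply]
    rw [h1, ih, hT, Finset.prod_range_succ, Function.iterate_succ_apply']
    ring

lemma backVec_eq (hφ : Function.Injective φ) (b : I → ℂ) {m : ℕ} {w t : I}
    (hw : φ^[m] w = t) :
    backVec φ b e m t = (∏ v ∈ Finset.range m, b (φ^[v] w)) • e w := by
  have h : ∃ j, φ^[m] j = t := ⟨w, hw⟩
  have hc : Classical.choose h = w := (hφ.iterate m) (by rw [Classical.choose_spec h, hw])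
  rw [backVec, dif_pos h, hc]

lemma backVec_eq_zero (b : I → ℂ) {m : ℕ} {t : I} (h : ∀ w, φ^[m] w ≠ t) :
    backVec φ b e m t = 0 := by
  rw [backVec, dif_neg]; push_neg; exact h

lemma pow_apply_e (hJ : Function.Injective J)
    (he : ∀ i j : I, J (e i) j = if j = i then 1 else 0)
    (hφ : Function.Injective φ) (b : I → ℂ) (Tl : X →L[ℂ] X)
    (hT : ∀ (x : X) (i : I), J (Tl x) i = b i * J x (φ i)) (m : ℕ) (t : I) :
    (Tl ^ m) (e t) = backVec φ b e m t := by
  apply hJ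
  funext i
  rw [coord_pow J φ b Tl hT, he]
  by_cases h : ∃ w, φ^[m] w = t
  · obtain ⟨w, hw⟩ := h
    rw [backVec_eq e φ hφ b hw, map_smul]
    simp only [Pi.smul_apply, smul_eq_mul, he]
    by_cases hiw : i = w
    · subst hiw; simp [hw]
    · have : ¬ (φ^[m] i = t) := fun hc => hiw ((hφ.iterate m) (by rw [hc, hw]))
      simp [hiw, this]
  · push_neg at h
    rw [backVec_eq_zero e φ b h]
    simp [h i]
end lemmas

lemma alpha_exists (a c : ℕ → ℝ) (ha0 : ∀ k, 0 ≤ a k) (hc0 : ∀ k, 0 ≤ c k)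
    (hac : Tendsto (fun k => a k * c k) atTop (𝓝 0)) :
    ∃ α : ℕ → ℝ, (∀ k, 0 < α k) ∧ Tendsto (fun k => α k * c k) atTop (𝓝 0) ∧
      Tendsto (fun k => a k / α k) atTop (𝓝 0) := by
  have hεpos : ∀ k : ℕ, 0 < Real.sqrt (a k * c k) + ((k:ℝ)+1)⁻¹ := fun k =>
    add_pos_of_nonneg_of_pos (Real.sqrt_nonneg _) (by positivity)
  refine ⟨fun k => a k / (Real.sqrt (a k * c k) + ((k:ℝ)+1)⁻¹) + (((k:ℝ)+1)*(c k+1))⁻¹,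
    ?_, ?_, ?_⟩
  · intro k
    have h2 : (0:ℝ) < (((k:ℝ)+1)*(c k+1))⁻¹ := by have := hc0 k; positivity
    exact add_pos_of_nonneg_of_pos (div_nonneg (ha0 k) (hεpos k).le) h2
  · have hε0 : Tendsto (fun k : ℕ => Real.sqrt (a k * c k) + ((k:ℝ)+1)⁻¹) atTop (𝓝 0) := by
      have h1 : Tendsto (fun k => Real.sqrt (a k * c k)) atTop (𝓝 0) := by
        have := hac.sqrt; simpa using this
      have h2 : Tendsto (fun k : ℕ => ((k:ℝ)+1)⁻¹) atTop (𝓝 0) := by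
        have := tendsto_one_div_add_atTop_nhds_zero_nat (𝕜 := ℝ)
        simpa [one_div] using this
      have := h1.add h2
      rw [add_zero] at this
      exact this
    refine squeeze_zero (fun k => mul_nonneg ?_ (hc0 k)) (fun k => ?_) hε0
    · have h2 : (0:ℝ) < (((k:ℝ)+1)*(c k+1))⁻¹ := by have := hc0 k; positivity
      exact (add_pos_of_nonneg_of_pos (div_nonneg (ha0 k) (hεpos k).le) h2).le
    · have hs : Real.sqrt (a k * c k) * Real.sqrt (a k * c k) = a k * c k :=
        Real.mul_self_sqrt (mul_nonneg (ha0 k) (hc0 k))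
      have hsn : 0 ≤ Real.sqrt (a k * c k) := Real.sqrt_nonneg _
      have hk1 : (0:ℝ) < ((k:ℝ)+1)⁻¹ := by positivity
      have e1 : a k / (Real.sqrt (a k * c k) + ((k:ℝ)+1)⁻¹) * c k
          ≤ Real.sqrt (a k * c k) := by
        rw [div_mul_eq_mul_div, div_le_iff₀ (hεpos k)]
        nlinarith
      have e2 : (((k:ℝ)+1)*(c k+1))⁻¹ * c k ≤ ((k:ℝ)+1)⁻¹ := by
        have hk : (0:ℝ) < (k:ℝ)+1 := by positivity
        rw [inv_mul_eq_div, div_le_iff₀ (by have := hc0 k; positivity), ← mul_assoc,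
          inv_mul_cancel₀ (ne_of_gt hk), one_mul]
        linarith [hc0 k]
      calc (a k / (Real.sqrt (a k * c k) + ((k:ℝ)+1)⁻¹) + (((k:ℝ)+1)*(c k+1))⁻¹) * c k
          = a k / (Real.sqrt (a k * c k) + ((k:ℝ)+1)⁻¹) * c k
            + (((k:ℝ)+1)*(c k+1))⁻¹ * c k := by ring
        _ ≤ Real.sqrt (a k * c k) + ((k:ℝ)+1)⁻¹ := add_le_add e1 e2
  · have hε0 : Tendsto (fun k : ℕ => Real.sqrt (a k * c k) + ((k:ℝ)+1)⁻¹) atTop (𝓝 0) := by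
      have h1 : Tendsto (fun k => Real.sqrt (a k * c k)) atTop (𝓝 0) := by
        have := hac.sqrt; simpa using this
      have h2 : Tendsto (fun k : ℕ => ((k:ℝ)+1)⁻¹) atTop (𝓝 0) := by
        have := tendsto_one_div_add_atTop_nhds_zero_nat (𝕜 := ℝ)
        simpa [one_div] using this
      have := h1.add h2
      rw [add_zero] at this
      exact this
    refine squeeze_zero (fun k => div_nonneg (ha0 k) ?_) (fun k => ?_) hε0
    · have h2 : (0:ℝ) < (((k:ℝ)+1)*(c k+1))⁻¹ := by have := hc0 k; positivity
      exact (add_pos_of_nonneg_of_pos (div_nonneg (ha0 k) (hεpos k).le) h2).le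
    · have hαpos : (0:ℝ) < a k / (Real.sqrt (a k * c k) + ((k:ℝ)+1)⁻¹)
          + (((k:ℝ)+1)*(c k+1))⁻¹ := by
        have h2 : (0:ℝ) < (((k:ℝ)+1)*(c k+1))⁻¹ := by have := hc0 k; positivity
        exact add_pos_of_nonneg_of_pos (div_nonneg (ha0 k) (hεpos k).le) h2
      rw [div_le_iff₀ hαpos]
      have h1 : (Real.sqrt (a k * c k) + ((k:ℝ)+1)⁻¹)
          * (a k / (Real.sqrt (a k * c k) + ((k:ℝ)+1)⁻¹)) = a k := by
        field_simp
      have h2 : (0:ℝ) < (((k:ℝ)+1)*(c k+1))⁻¹ := by have := hc0 k; positivity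
      nlinarith [mul_pos (hεpos k) h2]

noncomputable def SmapAux {X : Type*} [NormedAddCommGroup X] [NormedSpace ℂ X]
    {I : Type*} (e : I → X) (φ : I → I) (bb : I → ℂ) (m : ℕ) (x : X) : X :=
  if h : ∃ c : I →₀ ℂ, (c.sum fun j a => a • e j) = x then
    (Classical.choose h).sum
      (fun j a => (a * (∏ v ∈ Finset.range m, bb (φ^[v] j))⁻¹) • e (φ^[m] j))
  else 0


section twothree

variable {X : Type*} [NormedAddCommGroup X] [NormedSpace ℂ X]
    {I : Type*}

lemma two_to_three
    (J : X →L[ℂ] (I → ℂ)) (hJ : Function.Injective J)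
    (e : I → X) (he : ∀ i j : I, J (e i) j = if j = i then 1 else 0)
    (hdense : Dense (Submodule.span ℂ (Set.range e) : Set X))
    (φ : I → I) (hφ : Function.Injective φ)
    {N : ℕ}
    (r : Fin N → ℕ) (hr1 : ∀ l, 1 ≤ r l) (hr : StrictMono r)
    (b : Fin N → I → ℂ) (hb : ∀ l i, b l i ≠ 0)
    (T : Fin N → X →L[ℂ] X)
    (hT : ∀ (l : Fin N) (x : X) (i : I), J (T l x) i = b l i * J x (φ i))
    (hout : ∀ i : I, ∃ n₀ : ℕ, ∀ n ≥ n₀, ∀ j : I, φ^[n] j ≠ i)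
    (n : ℕ → ℕ) (hmono : StrictMono n)
    (h2 : ∀ i : I, ∀ s l : Fin N, s < l →
        Tendsto (fun k => ‖(∏ v ∈ Finset.range (r l * n k), b l (φ^[v] i))⁻¹ •
            backVec φ (b s) e (r s * n k) (φ^[r l * n k] i)‖) atTop (𝓝 0)) :
    DSupCriterionWrt (fun l : Fin N => (T l) ^ (r l)) n := by
  classical
  have hpow : ∀ (l : Fin N) (k : ℕ) (z : X),
      (((T l) ^ (r l)) ^ (n k)) z = ((T l) ^ (r l * n k)) z := by
    intro l k z; rw [← pow_mul]
  have happly : ∀ (l : Fin N) (m : ℕ) (t : I),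
      ((T l) ^ m) (e t) = backVec φ (b l) e m t :=
    fun l m t => pow_apply_e J e φ hJ he hφ (b l) (T l) (hT l) m t
  refine ⟨(Submodule.span ℂ (Set.range e) : Set X), fun _ => _,
    fun i k x => SmapAux e φ (b i) (r i * n k) x, hdense, fun _ => hdense, ?_, ?_⟩
  · -- condition (i)
    intro l i x hx
    have hex : ∃ c : I →₀ ℂ, (c.sum fun j a => a • e j) = x :=
      Finsupp.mem_span_range_iff_exists_finsupp.mp hx
    set c := Classical.choose hex with hcdef
    have hc : (c.sum fun j a => a • e j) = x := Classical.choose_spec hex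
    have hSm : ∀ k, SmapAux e φ (b i) (r i * n k) x
        = ∑ j ∈ c.support, ((c j) * (∏ v ∈ Finset.range (r i * n k), b i (φ^[v] j))⁻¹)
            • e (φ^[r i * n k] j) := by
      intro k
      rw [SmapAux, dif_pos hex]
      rfl
    have hkey : ∀ k, (((T l) ^ (r l)) ^ (n k)) (SmapAux e φ (b i) (r i * n k) x)
        = ∑ j ∈ c.support, ((c j) * (∏ v ∈ Finset.range (r i * n k), b i (φ^[v] j))⁻¹)
            • backVec φ (b l) e (r l * n k) (φ^[r i * n k] j) := by
      intro k
      rw [hpow, hSm, map_sum]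
      refine Finset.sum_congr rfl fun j _ => ?_
      rw [map_smul, happly]
    by_cases hil : i = l
    · subst hil
      have hfix : ∀ k, (((T i) ^ (r i)) ^ (n k)) (SmapAux e φ (b i) (r i * n k) x) = x := by
        intro k
        rw [hkey]
        have : ∀ j ∈ c.support,
            ((c j) * (∏ v ∈ Finset.range (r i * n k), b i (φ^[v] j))⁻¹)
              • backVec φ (b i) e (r i * n k) (φ^[r i * n k] j) = (c j) • e j := by
          intro j _
          rw [backVec_eq e φ hφ (b i) (rfl : φ^[r i * n k] j = φ^[r i * n k] j)]
          rw [smul_smul, mul_assoc, inv_mul_cancel₀ (Finset.prod_ne_zero_iff.mpr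
            fun v _ => hb i (φ^[v] j)), mul_one]
        rw [Finset.sum_congr rfl this, ← hc]
        rfl
      have hz : ∀ k, (((T i) ^ (r i)) ^ (n k)) (SmapAux e φ (b i) (r i * n k) x)
          - (if i = i then x else 0) = 0 := by
        intro k; rw [if_pos rfl, hfix k, sub_self]
      exact Tendsto.congr (fun k => (hz k).symm) tendsto_const_nhds
    · simp only [if_neg hil, sub_zero]
      simp only [hkey]
      rw [show (0 : X) = ∑ j ∈ c.support, (0 : X) by simp]
      refine tendsto_finset_sum _ fun j _ => ?_
      rcases lt_or_gt_of_ne (fun h => hil (h : i = l)) with hlt | hgt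
      · -- i < l : backVec vanishes eventually
        obtain ⟨n₀, hn₀⟩ := hout j
        have hev : ∀ᶠ k in atTop, ((c j) * (∏ v ∈ Finset.range (r i * n k), b i (φ^[v] j))⁻¹)
            • backVec φ (b l) e (r l * n k) (φ^[r i * n k] j) = 0 := by
          filter_upwards [eventually_ge_atTop n₀] with k hk
          have hd : (r l * n k) = (r i * n k) + (r l - r i) * n k := by
            have : r i ≤ r l := le_of_lt (hr hlt)
            rw [← Nat.add_mul, Nat.add_sub_cancel' this]
          have hz : ∀ w, φ^[r l * n k] w ≠ φ^[r i * n k] j := by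
            intro w hw
            rw [hd, Function.iterate_add_apply] at hw
            have := (hφ.iterate (r i * n k)) hw
            exact hn₀ ((r l - r i) * n k)
              (le_trans (le_trans hk (hmono.le_apply)) (Nat.le_mul_of_pos_left _
                (by have : r i < r l := hr hlt; omega))) w this
          rw [backVec_eq_zero e φ (b l) hz, smul_zero]
        refine Tendsto.congr' (by filter_upwards [hev] with k hk using hk.symm) tendsto_const_nhds
      · -- l < i : use h2
        have h2' := h2 j l i hgt
        rw [tendsto_zero_iff_norm_tendsto_zero]
        have : ∀ k, ‖((c j) * (∏ v ∈ Finset.range (r i * n k), b i (φ^[v] j))⁻¹)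
            • backVec φ (b l) e (r l * n k) (φ^[r i * n k] j)‖
            = ‖c j‖ * ‖(∏ v ∈ Finset.range (r i * n k), b i (φ^[v] j))⁻¹ •
                backVec φ (b l) e (r l * n k) (φ^[r i * n k] j)‖ := by
          intro k
          rw [mul_smul, norm_smul]
        simp only [this]
        simpa using h2'.const_mul ‖c j‖
  · -- condition (ii)
    intro l x hx y hy
    have hex : ∃ c : I →₀ ℂ, (c.sum fun j a => a • e j) = x :=
      Finsupp.mem_span_range_iff_exists_finsupp.mp hx
    obtain ⟨c, hc⟩ := hex
    have hev : ∀ᶠ k in atTop, (((T l) ^ (r l)) ^ (n k)) x = 0 := by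
      set M := c.support.sup (fun j => Classical.choose (hout j)) with hM
      filter_upwards [eventually_ge_atTop M] with k hk
      rw [hpow, ← hc]
      rw [show (c.sum fun j a => a • e j) = ∑ j ∈ c.support, (c j) • e j from rfl, map_sum]
      refine Finset.sum_eq_zero fun j hj => ?_
      rw [map_smul, happly, backVec_eq_zero e φ (b l), smul_zero]
      intro w
      refine Classical.choose_spec (hout j) _ ?_ w
      calc Classical.choose (hout j) ≤ M := by
            rw [hM]; exact Finset.le_sup (f := fun j => Classical.choose (hout j)) hj
        _ ≤ k := hk
        _ ≤ n k := hmono.le_apply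
        _ ≤ r l * n k := Nat.le_mul_of_pos_left _ (hr1 l)
    refine Tendsto.congr' ?_ tendsto_const_nhds
    filter_upwards [hev] with k hk
    rw [hk]
    simp
end twothree

section threeone

variable {X : Type*} [NormedAddCommGroup X] [NormedSpace ℂ X] [CompleteSpace X]
    [TopologicalSpace.SeparableSpace X]

lemma three_to_one
    {N : ℕ} (r : Fin N → ℕ) (T : Fin N → X →L[ℂ] X)
    (n : ℕ → ℕ) (hcrit : DSupCriterionWrt (fun l : Fin N => (T l) ^ (r l)) n) :
    Dense {x : X | Dense (Set.range fun p : ℂ × ℕ =>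
        fun l : Fin N => p.1 • (((T l) ^ (r l * p.2)) x))} := by
  classical
  haveI : SecondCountableTopology X := UniformSpace.secondCountable_of_separable X
  obtain ⟨𝒞, hcount, hempty, hbasis⟩ := TopologicalSpace.exists_countable_basis (Fin N → X)
  obtain ⟨X₀, Xs, S, hX₀, hXs, hi, hii⟩ := hcrit
  simp only at hi hii
  have hGopen : ∀ B : Set (Fin N → X), IsOpen B →
      IsOpen {x : X | ∃ p : ℂ × ℕ, (fun l : Fin N => p.1 • (((T l) ^ (r l * p.2)) x)) ∈ B} := by
    intro B hB
    have : {x : X | ∃ p : ℂ × ℕ, (fun l : Fin N => p.1 • (((T l) ^ (r l * p.2)) x)) ∈ B}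
        = ⋃ p : ℂ × ℕ, (fun x => fun l : Fin N => p.1 • (((T l) ^ (r l * p.2)) x)) ⁻¹' B := by
      ext x; simp [Set.mem_iUnion]
    rw [this]
    refine isOpen_iUnion fun p => (hB.preimage ?_)
    exact continuous_pi fun l => (((T l) ^ (r l * p.2)).continuous).const_smul p.1
  have hGdense : ∀ B ∈ 𝒞,
      Dense {x : X | ∃ p : ℂ × ℕ, (fun l : Fin N => p.1 • (((T l) ^ (r l * p.2)) x)) ∈ B} := by
    intro B hB
    have hBopen : IsOpen B := hbasis.isOpen hB
    have hBne : B.Nonempty := Set.nonempty_iff_ne_empty.mpr (fun h => hempty (h ▸ hB))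
    obtain ⟨y, hy⟩ := hBne
    obtain ⟨δ, hδ, hball⟩ := Metric.isOpen_iff.mp hBopen y hy
    rw [Metric.dense_iff]
    intro u ρ hρ
    obtain ⟨x₀, hx₀X, hx₀b⟩ := hX₀.exists_mem_open Metric.isOpen_ball
      ⟨u, Metric.mem_ball_self hρ⟩
    have hy' : ∀ j : Fin N, ∃ w, w ∈ Xs j ∧ w ∈ Metric.ball (y j) (δ/2) := by
      intro j
      exact (hXs j).exists_mem_open
        (Metric.isOpen_ball : IsOpen (Metric.ball (y j) (δ/2)))
        ⟨y j, Metric.mem_ball_self (by linarith)⟩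
    choose y' hy'X hy'b using hy'
    have hy'B : y' ∈ B := by
      apply hball
      rw [Metric.mem_ball, dist_pi_lt_iff hδ]
      intro j
      exact lt_of_lt_of_le (hy'b j) (by linarith)
    have hac : Tendsto (fun k => (∑ l, ‖(((T l) ^ (r l)) ^ (n k)) x₀‖)
        * ‖∑ j, S j k (y' j)‖) atTop (𝓝 0) := by
      have heq : (fun k => (∑ l, ‖(((T l) ^ (r l)) ^ (n k)) x₀‖) * ‖∑ j, S j k (y' j)‖)
          = fun k => ∑ l, ‖(((T l) ^ (r l)) ^ (n k)) x₀‖ * ‖∑ j, S j k (y' j)‖ := by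
        funext k; rw [Finset.sum_mul]
      rw [heq, show (0:ℝ) = ∑ _l : Fin N, (0:ℝ) by simp]
      exact tendsto_finset_sum _ fun l _ => hii l x₀ hx₀X y' hy'X
    obtain ⟨α, hαpos, hαc, hαa⟩ := alpha_exists _ _
      (fun k => Finset.sum_nonneg fun l _ => norm_nonneg _)
      (fun k => norm_nonneg _) hac
    have hnormα : ∀ k, ‖((α k : ℝ) : ℂ)‖ = α k := by
      intro k
      rw [Complex.norm_real, Real.norm_eq_abs, abs_of_pos (hαpos k)]
    have hαne : ∀ k, ((α k : ℝ) : ℂ) ≠ 0 :=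
      fun k h => absurd (Complex.ofReal_eq_zero.mp h) (ne_of_gt (hαpos k))
    set z : ℕ → X := fun k => x₀ + ((α k : ℝ) : ℂ) • ∑ j, S j k (y' j) with hzdef
    have hzx : Tendsto z atTop (𝓝 x₀) := by
      rw [tendsto_iff_norm_sub_tendsto_zero]
      refine squeeze_zero (fun k => norm_nonneg _) (fun k => ?_) hαc
      have h1 : z k - x₀ = ((α k : ℝ) : ℂ) • ∑ j, S j k (y' j) := by
        rw [hzdef]; exact add_sub_cancel_left x₀ _
      rw [h1, norm_smul, hnormα]
    have horb2 : Tendsto (fun k => fun l : Fin N =>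
        (((α k : ℝ) : ℂ)⁻¹) • (((T l) ^ (r l * n k)) (z k))) atTop (𝓝 y') := by
      rw [tendsto_pi_nhds]
      intro l
      have hsplit : ∀ k, (((α k : ℝ) : ℂ)⁻¹) • (((T l) ^ (r l * n k)) (z k))
          = ((α k : ℝ) : ℂ)⁻¹ • (((T l) ^ (r l)) ^ (n k)) x₀
            + ∑ j, (((T l) ^ (r l)) ^ (n k)) (S j k (y' j)) := by
        intro k
        have e0 : ∀ w : X, ((T l) ^ (r l * n k)) w = (((T l) ^ (r l)) ^ (n k)) w := by
          intro w; rw [← pow_mul]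
        rw [e0, hzdef]
        rw [map_add, map_smul, map_sum, smul_add, smul_smul,
          inv_mul_cancel₀ (hαne k), one_smul]
      have hpart1 : Tendsto (fun k => ((α k : ℝ) : ℂ)⁻¹ • (((T l) ^ (r l)) ^ (n k)) x₀)
          atTop (𝓝 0) := by
        rw [tendsto_zero_iff_norm_tendsto_zero]
        refine squeeze_zero (fun k => norm_nonneg _) (fun k => ?_) hαa
        rw [norm_smul, norm_inv, hnormα, div_eq_inv_mul]
        refine mul_le_mul_of_nonneg_left ?_ (inv_nonneg.mpr (hαpos k).le)
        exact Finset.single_le_sum (f := fun l => ‖(((T l) ^ (r l)) ^ (n k)) x₀‖)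
          (fun i _ => norm_nonneg _) (Finset.mem_univ l)
      have hpart2 : Tendsto (fun k => ∑ j, (((T l) ^ (r l)) ^ (n k)) (S j k (y' j)))
          atTop (𝓝 (y' l)) := by
        have hsum : ∀ k, ∑ j, (((T l) ^ (r l)) ^ (n k)) (S j k (y' j))
            = (∑ j, ((((T l) ^ (r l)) ^ (n k)) (S j k (y' j))
                - (if j = l then y' j else 0))) + y' l := by
          intro k
          rw [Finset.sum_sub_distrib]
          have h2 : ∑ j : Fin N, (if j = l then y' j else 0) = y' l := by
            rw [Finset.sum_ite_eq' Finset.univ l y']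
            simp
          rw [h2]; abel
        simp only [hsum]
        have hd : Tendsto (fun k => ∑ j : Fin N, ((((T l) ^ (r l)) ^ (n k)) (S j k (y' j))
            - (if j = l then y' j else 0))) atTop (𝓝 0) := by
          have := tendsto_finset_sum (Finset.univ)
            (fun (j : Fin N) (_ : j ∈ Finset.univ) => hi l j (y' j) (hy'X j))
          simpa using this
        have := hd.add (tendsto_const_nhds (x := y' l))
        rw [zero_add] at this
        exact this
      simp only [hsplit]
      have := hpart1.add hpart2
      rw [zero_add] at this
      exact this
    have hev1 : ∀ᶠ k in atTop, z k ∈ Metric.ball u ρ :=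
      hzx.eventually (Metric.isOpen_ball.mem_nhds hx₀b)
    have hev2 : ∀ᶠ k in atTop, (fun l : Fin N =>
        (((α k : ℝ) : ℂ)⁻¹) • (((T l) ^ (r l * n k)) (z k))) ∈ B :=
      horb2.eventually (hBopen.mem_nhds hy'B)
    obtain ⟨k, hk1, hk2⟩ := (hev1.and hev2).exists
    exact ⟨z k, hk1, ⟨(((α k : ℝ) : ℂ)⁻¹, n k), hk2⟩⟩
  have hsub : (⋂ B : 𝒞, {x : X | ∃ p : ℂ × ℕ,
        (fun l : Fin N => p.1 • (((T l) ^ (r l * p.2)) x)) ∈ (B : Set (Fin N → X))})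
      ⊆ {x : X | Dense (Set.range fun p : ℂ × ℕ =>
        fun l : Fin N => p.1 • (((T l) ^ (r l * p.2)) x))} := by
    intro x hx
    rw [Set.mem_setOf_eq, hbasis.dense_iff]
    intro o ho hone
    have hxo : x ∈ {x : X | ∃ p : ℂ × ℕ,
        (fun l : Fin N => p.1 • (((T l) ^ (r l * p.2)) x)) ∈ o} :=
      Set.mem_iInter.mp hx ⟨o, ho⟩
    obtain ⟨p, hp⟩ := hxo
    exact ⟨_, hp, Set.mem_range_self p⟩
  haveI : Countable 𝒞 := hcount.to_subtype
  exact (dense_iInter_of_isOpen (fun B : 𝒞 => hGopen B (hbasis.isOpen B.2))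
    (fun B : 𝒞 => hGdense B B.2)).mono hsub
end threeone

section onetwo

variable {X : Type*} [NormedAddCommGroup X] [NormedSpace ℂ X] [CompleteSpace X]

lemma one_to_two (hinfdim : ¬ FiniteDimensional ℂ X)
    {I : Type*} [Countable I] [Infinite I]
    (J : X →L[ℂ] (I → ℂ))
    (e : I → X) (he : ∀ i j : I, J (e i) j = if j = i then 1 else 0)
    (f : I → X →L[ℂ] ℂ) (hf : ∀ (i : I) (x : X), f i x = J x i)
    (hOP : ∃ C : ℝ, ∀ i : I, ‖e i‖ * ‖f i‖ ≤ C)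
    (φ : I → I) (hφ : Function.Injective φ)
    {N : ℕ} (hN : 2 ≤ N)
    (r : Fin N → ℕ) (hr1 : ∀ l, 1 ≤ r l) (hr : StrictMono r)
    (b : Fin N → I → ℂ) (hb : ∀ l i, b l i ≠ 0)
    (T : Fin N → X →L[ℂ] X)
    (hT : ∀ (l : Fin N) (x : X) (i : I), J (T l x) i = b l i * J x (φ i))
    (hout : ∀ i : I, ∃ n₀ : ℕ, ∀ n ≥ n₀, ∀ j : I, φ^[n] j ≠ i)
    (hdense1 : Dense {x : X | Dense (Set.range fun p : ℂ × ℕ =>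
        fun l : Fin N => p.1 • (((T l) ^ (r l * p.2)) x))}) :
    ∃ n : ℕ → ℕ, StrictMono n ∧ (∀ k, 1 ≤ n k) ∧
      ∀ i : I, ∀ s l : Fin N, s < l →
        Tendsto (fun k => ‖(∏ v ∈ Finset.range (r l * n k), b l (φ^[v] i))⁻¹ •
            backVec φ (b s) e (r s * n k) (φ^[r l * n k] i)‖) atTop (𝓝 0) := by
  classical
  obtain ⟨x, hx⟩ : ∃ x : X, Dense (Set.range fun p : ℂ × ℕ =>
      fun l : Fin N => p.1 • (((T l) ^ (r l * p.2)) x)) := hdense1.nonempty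
  obtain ⟨C, hC⟩ := hOP
  have hC0 : 0 ≤ C := by
    obtain ⟨i₀⟩ := (inferInstance : Nonempty I)
    exact le_trans (mul_nonneg (norm_nonneg _) (norm_nonneg _)) (hC i₀)
  obtain ⟨σ, hσ⟩ := exists_surjective_nat I
  -- the quantity to be bounded
  set Q : I → Fin N → Fin N → ℕ → ℝ := fun i s l m =>
    ‖(∏ v ∈ Finset.range (r l * m), b l (φ^[v] i))⁻¹ •
      backVec φ (b s) e (r s * m) (φ^[r l * m] i)‖ with hQ
  -- main step
  have hstep : ∀ (K : ℕ) (F : Finset I) (ε : ℝ), 0 < ε →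
      ∃ m, K < m ∧ ∀ i ∈ F, ∀ s l : Fin N, s < l → Q i s l m ≤ ε := by
    intro K F ε hε
    rcases F.eq_empty_or_nonempty with hF | hF
    · exact ⟨K+1, by omega, by simp [hF]⟩
    set B' : ℝ := F.sup' hF (fun i => ‖f i‖) with hB'
    have hB'0 : 0 ≤ B' :=
      le_trans (norm_nonneg (f hF.choose))
        (Finset.le_sup' (fun i => ‖f i‖) hF.choose_spec)
    set ε' : ℝ := min (ε/(2*(C+1))) (1/(2*(B'+1))) with hε'
    have hε'pos : 0 < ε' := lt_min (by positivity) (by positivity)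
    set M : ℕ := F.sup (fun j => Classical.choose (hout j)) with hM
    set K' : ℕ := max K M with hK'
    set y : Fin N → X := fun _ => ∑ j ∈ F, e j with hy
    -- the finite union of lines to avoid
    set U : Set (Fin N → X) := ⋃ m' : Fin (K'+1),
      (Submodule.span ℂ {(fun l : Fin N => ((T l) ^ (r l * (m' : ℕ))) x)} :
        Set (Fin N → X)) with hU
    have hUclosed : IsClosed U := by
      refine isClosed_iUnion_of_finite fun m' => ?_
      haveI := FiniteDimensional.span_singleton ℂ
        (fun l : Fin N => ((T l) ^ (r l * (m' : ℕ))) x)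
      exact Submodule.closed_of_finiteDimensional _
    have hUcompl : Dense Uᶜ := by
      rw [hU, Set.compl_iUnion]
      refine dense_iInter_of_isOpen (fun m' => ?_) (fun m' => ?_)
      · haveI := FiniteDimensional.span_singleton ℂ
          (fun l : Fin N => ((T l) ^ (r l * (m' : ℕ))) x)
        exact (Submodule.closed_of_finiteDimensional _).isOpen_compl
      · rw [← interior_eq_empty_iff_dense_compl]
        by_contra hne
        have hne' : (interior ((Submodule.span ℂ
            {(fun l : Fin N => ((T l) ^ (r l * (m' : ℕ))) x)} :
              Submodule ℂ (Fin N → X)) : Set (Fin N → X))).Nonempty :=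
          Set.nonempty_iff_ne_empty.mpr hne
        have htop := Submodule.eq_top_of_nonempty_interior' _ hne'
        haveI : FiniteDimensional ℂ (⊤ : Submodule ℂ (Fin N → X)) := by
          rw [← htop]
          exact FiniteDimensional.span_singleton ℂ _
        haveI : FiniteDimensional ℂ (Fin N → X) :=
          Module.Finite.equiv (Submodule.topEquiv)
        have l₀ : Fin N := ⟨0, by omega⟩
        have hsurj : Function.Surjective
            (LinearMap.proj (R := ℂ) (φ := fun _ : Fin N => X) l₀) :=
          fun w => ⟨fun _ => w, rfl⟩
        exact hinfdim (Module.Finite.of_surjective _ hsurj)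
    -- pick an orbit element in the good open set
    obtain ⟨w, hwr, hwb, hwU⟩ : ∃ w, w ∈ (Set.range fun p : ℂ × ℕ =>
        fun l : Fin N => p.1 • (((T l) ^ (r l * p.2)) x)) ∧
        w ∈ Metric.ball y ε' ∧ w ∉ U := by
      have hne : (Metric.ball y ε' ∩ Uᶜ).Nonempty :=
        hUcompl.inter_open_nonempty _ Metric.isOpen_ball
          ⟨y, Metric.mem_ball_self hε'pos⟩
      obtain ⟨v, hv1, hv2⟩ := hne
      obtain ⟨w, hw1, hw2⟩ := hx.exists_mem_open
        (Metric.isOpen_ball.inter hUclosed.isOpen_compl)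
        ⟨v, hv1, hv2⟩
      exact ⟨w, hw1, hw2.1, hw2.2⟩
    obtain ⟨⟨lam, m⟩, rfl⟩ := hwr
    -- m is large
    have hm : K' < m := by
      by_contra hcon
      push_neg at hcon
      apply hwU
      rw [hU]
      refine Set.mem_iUnion.mpr ⟨⟨m, by omega⟩, ?_⟩
      have heq : (fun p : ℂ × ℕ => fun l : Fin N => p.1 • (((T l) ^ (r l * p.2)) x)) (lam, m)
          = lam • (fun l : Fin N => ((T l) ^ (r l * m)) x) := rfl
      rw [heq]
      exact Submodule.smul_mem _ lam (Submodule.mem_span_singleton_self _)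
    have hm1 : 1 ≤ m := by omega
    -- coordinatewise estimates
    have hcoord : ∀ l' : Fin N,
        ‖lam • (((T l') ^ (r l' * m)) x) - y l'‖ < ε' := by
      intro l'
      have := (dist_pi_lt_iff hε'pos).mp (Metric.mem_ball.mp hwb) l'
      rwa [dist_eq_norm] at this
    refine ⟨m, by omega, ?_⟩
    intro i hiF s l hsl
    have hrs : r s < r l := hr hsl
    set d : ℕ := (r l - r s) * m with hd
    have hdge : m ≤ d := by
      rw [hd]; exact Nat.le_mul_of_pos_left _ (by omega)
    have hml : r l * m = r s * m + d := by
      rw [hd, ← Nat.add_mul]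
      congr 1
      omega
    set w0 : I := φ^[d] i with hw0def
    have hw0 : φ^[r s * m] w0 = φ^[r l * m] i := by
      rw [hw0def, ← Function.iterate_add_apply, ← hml]
    have hw0F : w0 ∉ F := by
      intro hmem
      have hspec := Classical.choose_spec (hout w0)
      refine hspec d (le_trans ?_ hdge) i hw0def.symm
      calc Classical.choose (hout w0) ≤ M := by
            rw [hM]; exact Finset.le_sup (f := fun j => Classical.choose (hout j)) hmem
        _ ≤ K' := le_max_right _ _
        _ ≤ m := le_of_lt hm
    set u : ℂ := J x (φ^[r l * m] i) with hu
    set Pl : ℂ := ∏ v ∈ Finset.range (r l * m), b l (φ^[v] i) with hPl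
    set Ps : ℂ := ∏ v ∈ Finset.range (r s * m), b s (φ^[v] w0) with hPs
    have hPlne : Pl ≠ 0 := by
      rw [hPl]
      exact Finset.prod_ne_zero_iff.mpr fun v _ => hb l (φ^[v] i)
    -- coordinate values
    have hJorb : ∀ (l' : Fin N) (j : I), J (lam • (((T l') ^ (r l' * m)) x)) j
        = lam * ((∏ v ∈ Finset.range (r l' * m), b l' (φ^[v] j)) * J x (φ^[r l' * m] j)) := by
      intro l' j
      rw [map_smul]
      rw [Pi.smul_apply, smul_eq_mul, coord_pow J φ (b l') (T l') (hT l')]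
    have hJyi : J (y l) i = 1 := by
      rw [hy]
      simp only [map_sum]
      rw [Finset.sum_apply]
      have : ∀ j ∈ F, J (e j) i = if i = j then 1 else 0 := fun j _ => he j i
      rw [Finset.sum_congr rfl this, Finset.sum_ite_eq F i (fun _ => (1:ℂ)), if_pos hiF]
    have hJyw0 : J (y s) w0 = 0 := by
      rw [hy]
      simp only [map_sum]
      rw [Finset.sum_apply]
      have : ∀ j ∈ F, J (e j) w0 = if w0 = j then 1 else 0 := fun j _ => he j w0
      rw [Finset.sum_congr rfl this, Finset.sum_ite_eq F w0 (fun _ => (1:ℂ)), if_neg hw0F]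
    -- estimate E1
    have E1 : ‖lam * (Pl * u) - 1‖ ≤ ‖f i‖ * ε' := by
      have h := (f i).le_opNorm ((lam • (((T l) ^ (r l * m)) x)) - y l)
      rw [map_sub] at h
      have ha : f i (lam • (((T l) ^ (r l * m)) x)) = lam * (Pl * u) := by
        rw [hf, hJorb, ← hPl, ← hu]
      have hb2 : f i (y l) = 1 := by rw [hf, hJyi]
      rw [ha, hb2] at h
      exact le_trans h (mul_le_mul_of_nonneg_left (le_of_lt (hcoord l)) (norm_nonneg _))
    -- estimate E2
    have E2 : ‖lam * (Ps * u)‖ ≤ ‖f w0‖ * ε' := by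
      have h := (f w0).le_opNorm ((lam • (((T s) ^ (r s * m)) x)) - y s)
      rw [map_sub] at h
      have ha : f w0 (lam • (((T s) ^ (r s * m)) x)) = lam * (Ps * u) := by
        rw [hf, hJorb, ← hPs, hw0, ← hu]
      have hb2 : f w0 (y s) = 0 := by rw [hf, hJyw0]
      rw [ha, hb2, sub_zero] at h
      exact le_trans h (mul_le_mul_of_nonneg_left (le_of_lt (hcoord s)) (norm_nonneg _))
    -- lower bound
    have hfi : ‖f i‖ ≤ B' := by
      rw [hB']; exact Finset.le_sup' (fun i => ‖f i‖) hiF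
    have hfie : ‖f i‖ * ε' ≤ 1/2 := by
      have h1 : ε' ≤ 1/(2*(B'+1)) := min_le_right _ _
      have h2 : ‖f i‖ * ε' ≤ B' * (1/(2*(B'+1))) := by
        refine mul_le_mul hfi h1 (le_of_lt hε'pos) hB'0
      refine le_trans h2 ?_
      rw [mul_one_div, div_le_div_iff₀ (by positivity) (by norm_num)]
      nlinarith
    have hlow : 1/2 ≤ ‖lam * (Pl * u)‖ := by
      have h1 : ‖(1:ℂ)‖ - ‖lam * (Pl * u)‖ ≤ ‖(1:ℂ) - lam * (Pl * u)‖ :=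
        norm_sub_norm_le _ _
      rw [norm_one] at h1
      rw [norm_sub_rev] at h1
      have := le_trans h1 (le_trans E1 hfie)
      linarith
    -- conclusion
    have hQval : Q i s l m = ‖Pl⁻¹ * Ps‖ * ‖e w0‖ := by
      rw [hQ]
      simp only
      rw [backVec_eq e φ hφ (b s) hw0, ← hPl, ← hPs, smul_smul, norm_smul]
    rw [hQval]
    -- real arithmetic
    have hA : ‖lam * (Pl * u)‖ = ‖Pl‖ * (‖lam‖ * ‖u‖) := by
      rw [norm_mul, norm_mul]; ring
    have hB : ‖lam * (Ps * u)‖ = ‖Ps‖ * (‖lam‖ * ‖u‖) := by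
      rw [norm_mul, norm_mul]; ring
    set A : ℝ := ‖lam‖ * ‖u‖ with hAdef
    rw [hA] at hlow
    rw [hB] at E2
    have hA0 : 0 ≤ A := mul_nonneg (norm_nonneg _) (norm_nonneg _)
    have hPl0 : 0 < ‖Pl‖ := norm_pos_iff.mpr hPlne
    have hApos : 0 < A := by
      rcases lt_or_eq_of_le hA0 with h | h
      · exact h
      · exfalso; rw [← h, mul_zero] at hlow; linarith
    have hPs0 : 0 ≤ ‖Ps‖ := norm_nonneg _
    have hE0 : 0 ≤ ‖e w0‖ := norm_nonneg _
    have hfw0 : 0 ≤ ‖f w0‖ := norm_nonneg _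
    have hCw0 : ‖e w0‖ * ‖f w0‖ ≤ C := hC w0
    have hεfinal : ε' * (2*(C+1)) ≤ ε := by
      have h1 : ε' ≤ ε/(2*(C+1)) := min_le_left _ _
      rw [le_div_iff₀ (by positivity)] at h1
      exact h1
    have key : ‖Pl⁻¹ * Ps‖ * ‖e w0‖ * (‖Pl‖ * A) = ‖Ps‖ * A * ‖e w0‖ := by
      rw [norm_mul, norm_inv]
      rw [show ‖Pl‖⁻¹ * ‖Ps‖ * ‖e w0‖ * (‖Pl‖ * A)
          = (‖Pl‖⁻¹ * ‖Pl‖) * (‖Ps‖ * A * ‖e w0‖) from by ring,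
        inv_mul_cancel₀ (ne_of_gt hPl0), one_mul]
    have s1 : ‖Ps‖ * A * ‖e w0‖ ≤ (‖f w0‖ * ε') * ‖e w0‖ :=
      mul_le_mul_of_nonneg_right E2 hE0
    have s2 : (‖f w0‖ * ε') * ‖e w0‖ ≤ C * ε' := by
      have : (‖f w0‖ * ε') * ‖e w0‖ = (‖e w0‖ * ‖f w0‖) * ε' := by ring
      rw [this]
      exact mul_le_mul_of_nonneg_right hCw0 (le_of_lt hε'pos)
    have hX0 : 0 ≤ ‖Pl⁻¹ * Ps‖ * ‖e w0‖ :=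
      mul_nonneg (norm_nonneg _) hE0
    have t1 : ‖Pl⁻¹ * Ps‖ * ‖e w0‖ * (1/2) ≤ C * ε' := by
      calc ‖Pl⁻¹ * Ps‖ * ‖e w0‖ * (1/2)
          ≤ ‖Pl⁻¹ * Ps‖ * ‖e w0‖ * (‖Pl‖ * A) := mul_le_mul_of_nonneg_left hlow hX0
        _ = ‖Ps‖ * A * ‖e w0‖ := key
        _ ≤ (‖f w0‖ * ε') * ‖e w0‖ := s1
        _ ≤ C * ε' := s2
    linarith [t1, hεfinal, hε'pos]
  -- build the sequence recursively
  have hrec : ∀ (k K : ℕ), ∃ m, K < m ∧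
      ∀ i ∈ (Finset.range (k+1)).image σ, ∀ s l : Fin N, s < l →
        Q i s l m ≤ 1/((k:ℝ)+1) :=
    fun k K => hstep K ((Finset.range (k+1)).image σ) (1/((k:ℝ)+1)) (by positivity)
  have hex : ∃ nf : ℕ → ℕ, (∀ k, nf k < nf (k+1)) ∧ 0 < nf 0 ∧
      ∀ k, ∀ i ∈ (Finset.range (k+1)).image σ, ∀ s l : Fin N, s < l →
        Q i s l (nf k) ≤ 1/((k:ℝ)+1) := by
    refine ⟨fun k => Nat.rec (motive := fun _ => ℕ) (Classical.choose (hrec 0 0))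
      (fun k ih => Classical.choose (hrec (k+1) ih)) k,
      fun k => (Classical.choose_spec (hrec (k+1) _)).1,
      (Classical.choose_spec (hrec 0 0)).1, ?_⟩
    intro k
    cases k with
    | zero => exact (Classical.choose_spec (hrec 0 0)).2
    | succ k => exact (Classical.choose_spec (hrec (k+1) _)).2
  obtain ⟨nfun, hnsucc, hn0, hbnd⟩ := hex
  have hmono : StrictMono nfun := strictMono_nat_of_lt_succ hnsucc
  refine ⟨nfun, hmono, ?_, ?_⟩
  · intro k
    calc 1 ≤ nfun 0 := hn0
      _ ≤ nfun k := hmono.monotone (Nat.zero_le k)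
  · intro i s l hsl
    obtain ⟨m₀, hm₀⟩ := hσ i
    refine squeeze_zero' (g := fun k : ℕ => 1/((k:ℝ)+1))
      (Eventually.of_forall fun (k : ℕ) => norm_nonneg
        ((∏ v ∈ Finset.range (r l * nfun k), b l (φ^[v] i))⁻¹ •
          backVec φ (b s) e (r s * nfun k) (φ^[r l * nfun k] i))) ?_ ?_
    · filter_upwards [eventually_ge_atTop m₀] with k hk
      have hi : i ∈ (Finset.range (k+1)).image σ :=
        Finset.mem_image.mpr ⟨m₀, Finset.mem_range.mpr (by omega), hm₀⟩
      exact hbnd k i hi s l hsl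
    · exact tendsto_one_div_add_atTop_nhds_zero_nat
end onetwo

theorem stmt7
    {X : Type*} [NormedAddCommGroup X] [NormedSpace ℂ X] [CompleteSpace X]
    [TopologicalSpace.SeparableSpace X] (hinfdim : ¬ FiniteDimensional ℂ X)
    {I : Type*} [Countable I] [Infinite I]
    (J : X →L[ℂ] (I → ℂ)) (hJ : Function.Injective J)
    (e : I → X) (he : ∀ i j : I, J (e i) j = if j = i then 1 else 0)
    (f : I → X →L[ℂ] ℂ) (hf : ∀ (i : I) (x : X), f i x = J x i)
    (hdense : Dense (Submodule.span ℂ (Set.range e) : Set X))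
    (hOP : ∃ C : ℝ, ∀ i : I, ‖e i‖ * ‖f i‖ ≤ C)
    (φ : I → I) (hφ : Function.Injective φ)
    {N : ℕ} (hN : 2 ≤ N)
    (r : Fin N → ℕ) (hr1 : ∀ l, 1 ≤ r l) (hr : StrictMono r)
    (b : Fin N → I → ℂ) (hb : ∀ l i, b l i ≠ 0)
    (T : Fin N → X →L[ℂ] X)
    (hT : ∀ (l : Fin N) (x : X) (i : I), J (T l x) i = b l i * J x (φ i))
    (hout : ∀ i : I, ∃ n₀ : ℕ, ∀ n ≥ n₀, ∀ j : I, φ^[n] j ≠ i) :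
    (Dense {x : X | Dense (Set.range fun p : ℂ × ℕ =>
        fun l : Fin N => p.1 • (((T l) ^ (r l * p.2)) x))}
      ↔
    (∃ n : ℕ → ℕ, StrictMono n ∧ (∀ k, 1 ≤ n k) ∧
      ∀ i : I, ∀ s l : Fin N, s < l →
        Tendsto (fun k => ‖(∏ v ∈ Finset.range (r l * n k), b l (φ^[v] i))⁻¹ •
            backVec φ (b s) e (r s * n k) (φ^[r l * n k] i)‖) atTop (𝓝 0)))
    ∧
    ((∃ n : ℕ → ℕ, StrictMono n ∧ (∀ k, 1 ≤ n k) ∧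
      ∀ i : I, ∀ s l : Fin N, s < l →
        Tendsto (fun k => ‖(∏ v ∈ Finset.range (r l * n k), b l (φ^[v] i))⁻¹ •
            backVec φ (b s) e (r s * n k) (φ^[r l * n k] i)‖) atTop (𝓝 0))
      ↔
    (∃ n : ℕ → ℕ, StrictMono n ∧ (∀ k, 1 ≤ n k) ∧
      DSupCriterionWrt (fun l : Fin N => (T l) ^ (r l)) n)) := by
  constructor
  · constructor
    · intro h1
      exact one_to_two hinfdim J e he f hf hOP φ hφ hN r hr1 hr b hb T hT hout h1
    · rintro ⟨n, hm, hn1, h2⟩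
      exact three_to_one r T n
        (two_to_three J hJ e he hdense φ hφ r hr1 hr b hb T hT hout n hm h2)
  · constructor
    · rintro ⟨n, hm, hn1, h2⟩
      exact ⟨n, hm, hn1,
        two_to_three J hJ e he hdense φ hφ r hr1 hr b hb T hT hout n hm h2⟩
    · rintro ⟨n, hm, hn1, hcrit⟩
      exact one_to_two hinfdim J e he f hf hOP φ hφ hN r hr1 hr b hb T hT hout
        (three_to_one r T n hcrit)
end

section
/- Let X = ℓ²(ℕ) with canonical orthonormal basis (e_j)_{j∈ℕ}, let integers 1 ≤ r₁ < r₂ < ⋯ < r_N (N ≥ 2) be given, and for each 1 ≤ l ≤ N let (a_{l,n})_{n=1}^∞ be a bounded sequence of nonzero complex scalars and let T_l be the unilateral backward weighted shift on X determined by T_l e₀ = 0 and T_l e_j = a_{l,j} e_{j−1} for j ≥ 1. Then T₁^{r₁}, T₂^{r₂}, …, T_N^{r_N} are densely d-supercyclic if and only if there exists a strictly increasing sequence (n_k)_{k≥1} of positive integers such that for every i ∈ ℕ and all 1 ≤ s < l ≤ N, |(∏_{v=i+1}^{i+r_l n_k} a_{l,v})^{−1} · ∏_{v=i+(r_l−r_s)n_k+1}^{i+r_l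 n_k} a_{s,v}| → 0 as k → ∞. -/
open Filter Topology
set_option maxHeartbeats 1000000
set_option synthInstance.maxHeartbeats 1000000
noncomputable section
abbrev XX := lp (fun _ : ℕ => ℂ) 2

lemma coord_le_norm (f : XX) (i : ℕ) : ‖f i‖ ≤ ‖f‖ := by
  simpa using lp.norm_apply_le_norm (by norm_num) f i

lemma single_apply' (i : ℕ) (c : ℂ) (j : ℕ) :
    (lp.single 2 i c : ∀ _ : ℕ, ℂ) j = if j = i then c else 0 := by
  rcases eq_or_ne j i with h | h
  · subst h; simp [lp.single_apply_self]
  · simp [lp.single_apply_ne _ _ _ h, h]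

lemma norm_single' (i : ℕ) (c : ℂ) : ‖(lp.single 2 i c : XX)‖ = ‖c‖ := by
  simpa using lp.norm_single (p := 2) (E := fun _ : ℕ => ℂ) (by norm_num) i c

lemma single_sub' (i : ℕ) (c d : ℂ) :
    (lp.single 2 i (c - d) : XX) = lp.single 2 i c - lp.single 2 i d := by
  apply lp.ext; funext j
  rcases eq_or_ne j i with h | h
  · subst h; simp [lp.single_apply_self, lp.coeFn_sub]
  · simp [lp.single_apply_ne _ _ _ h, lp.coeFn_sub, h]

lemma approx_fin (f : XX) {ε : ℝ} (hε : 0 < ε) :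
    ∃ q₀ : ℕ, ∀ q ≥ q₀, ‖f - ∑ i ∈ Finset.range (q+1), lp.single 2 i (f i)‖ < ε := by
  have h := lp.hasSum_single (E := fun _ : ℕ => ℂ) (by norm_num) f
  rw [HasSum] at h
  have h2 := Metric.tendsto_nhds.mp h ε hε
  rw [SummationFilter.unconditional_filter] at h2
  rw [Filter.eventually_atTop] at h2
  obtain ⟨s₀, hs₀⟩ := h2
  refine ⟨s₀.sup id, fun q hq => ?_⟩
  have hsub : s₀ ⊆ Finset.range (q+1) := by
    intro i hi
    simp only [Finset.mem_range]
    exact lt_of_le_of_lt (le_trans (Finset.le_sup (f := id) hi) hq) (Nat.lt_succ_self q)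
  have := hs₀ _ hsub
  rwa [dist_eq_norm, ← norm_neg, neg_sub] at this

lemma sep_XX : TopologicalSpace.SeparableSpace XX := by
  have key : ∀ m : ℕ, TopologicalSpace.IsSeparable
      (Set.range (fun c : Fin m → ℂ => ∑ i : Fin m, lp.single 2 (i : ℕ) (c i) : (Fin m → ℂ) → XX)) := by
    intro m
    have hc : Continuous (fun c : Fin m → ℂ => ∑ i : Fin m, lp.single 2 (i : ℕ) (c i) : (Fin m → ℂ) → XX) := by
      apply continuous_finset_sum
      intro i _
      have h1 : Continuous (fun c : Fin m → ℂ => c i) := continuous_apply i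
      have h2 : Continuous (fun z : ℂ => (lp.single 2 (i : ℕ) z : XX)) := by
        have hiso : Isometry (fun z : ℂ => (lp.single 2 (i : ℕ) z : XX)) := by
          intro z w
          rw [edist_dist, edist_dist, dist_eq_norm, dist_eq_norm]
          congr 1
          rw [show (fun z : ℂ => (lp.single 2 (i:ℕ) z : XX)) z - (fun z : ℂ => (lp.single 2 (i:ℕ) z : XX)) w
              = lp.single 2 (i:ℕ) (z - w) from (single_sub' _ _ _).symm, norm_single']
        exact hiso.continuous
      exact h2.comp h1
    rw [← Set.image_univ]
    exact (TopologicalSpace.isSeparable_univ_iff.mpr inferInstance).image hc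
  rw [← TopologicalSpace.isSeparable_univ_iff]
  have hsub : (Set.univ : Set XX) ⊆ closure (⋃ m : ℕ, Set.range (fun c : Fin m → ℂ => ∑ i : Fin m, lp.single 2 (i : ℕ) (c i))) := by
    intro f _
    rw [Metric.mem_closure_iff]
    intro ε hε
    obtain ⟨q₀, hq⟩ := approx_fin f hε
    refine ⟨∑ i ∈ Finset.range (q₀+1), lp.single 2 i (f i), ?_, ?_⟩
    · refine Set.mem_iUnion.mpr ⟨q₀+1, ⟨fun i : Fin (q₀+1) => f i, ?_⟩⟩
      exact (Finset.sum_range (fun i => lp.single 2 i (f i) : ℕ → XX)).symm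
    · rw [dist_eq_norm]; exact hq q₀ le_rfl
  exact ((TopologicalSpace.IsSeparable.iUnion key).closure.mono hsub)

section Pow
variable {a : ℕ → ℂ} {T : XX →L[ℂ] XX}
  (hT : ∀ (x : XX) (j : ℕ), (T x : ∀ _ : ℕ, ℂ) j = a (j + 1) * (x : ∀ _ : ℕ, ℂ) (j + 1))
include hT
lemma wshift_pow_apply (m : ℕ) (x : XX) (j : ℕ) :
    ((T ^ m) x : ∀ _ : ℕ, ℂ) j = (∏ v ∈ Finset.Icc (j+1) (j+m), a v) * (x : ∀ _ : ℕ, ℂ) (j+m) := by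
  induction m generalizing j x with
  | zero => simp
  | succ m ih =>
    rw [pow_succ, ContinuousLinearMap.mul_apply, ih, hT]
    rw [show j + (m+1) = (j + m) + 1 by ring, Finset.prod_Icc_succ_top (by omega)]
    ring
lemma pow_single_lt {M j : ℕ} (c : ℂ) (h : j < M) : (T ^ M) (lp.single 2 j c) = 0 := by
  apply lp.ext; funext j'
  rw [lp.coeFn_zero, Pi.zero_apply, wshift_pow_apply hT, single_apply']
  rw [if_neg (by omega)]
  ring
lemma pow_single_le {M j : ℕ} (c : ℂ) (h : M ≤ j) :
    (T ^ M) (lp.single 2 j c) = lp.single 2 (j - M) ((∏ v ∈ Finset.Icc (j - M + 1) j, a v) * c) := by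
  apply lp.ext; funext j'
  rw [wshift_pow_apply hT, single_apply', single_apply']
  rcases eq_or_ne j' (j - M) with h' | h'
  · subst h'
    rw [if_pos (by omega), if_pos rfl, show j - M + M = j by omega]
  · rw [if_neg (by omega), if_neg h']
    ring
end Pow

section Core
variable {N : ℕ} {r : Fin N → ℕ} {a : Fin N → ℕ → ℂ} {T : Fin N → XX →L[ℂ] XX}
  (hr1 : ∀ l, 1 ≤ r l) (hr : StrictMono r)
  (ha0 : ∀ (l : Fin N) (m : ℕ), 1 ≤ m → a l m ≠ 0)
  (hT : ∀ (l : Fin N) (x : XX) (j : ℕ),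
      (T l x : ∀ _ : ℕ, ℂ) j = a l (j + 1) * (x : ∀ _ : ℕ, ℂ) (j + 1))

/-- the ratio quantity -/
def RR (r : Fin N → ℕ) (a : Fin N → ℕ → ℂ) (i : ℕ) (s l : Fin N) (n : ℕ) : ℝ :=
  ‖(∏ v ∈ Finset.Icc (i + 1) (i + r l * n), a l v)⁻¹ *
    ∏ v ∈ Finset.Icc (i + (r l - r s) * n + 1) (i + r l * n), a s v‖

include hr1 hr ha0 hT in
lemma core (q : ℕ) (ξ : ℕ → ℂ) (η : Fin N → ℕ → ℂ) {ε ε' : ℝ} (hε : 0 < ε) (hε' : 0 ≤ ε')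
    {n : ℕ} (hnq : q < n)
    (hratio : ∀ i ≤ q, ∀ s l : Fin N, s < l → RR r a i s l n ≤ ε') :
    ∃ (z : XX) (lam : ℂ),
      ‖z - ∑ i ∈ Finset.range (q+1), lp.single 2 i (ξ i)‖ < ε ∧
      ∀ l : Fin N, ‖lam • ((T l ^ (r l * n)) z) - ∑ i ∈ Finset.range (q+1), lp.single 2 i (η l i)‖
        ≤ (∑ l' : Fin N, ∑ i ∈ Finset.range (q+1), ‖η l' i‖) * ε' := by
  classical
  set x₀ : XX := ∑ i ∈ Finset.range (q+1), lp.single 2 i (ξ i) with hx₀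
  set P : Fin N → ℕ → ℂ := fun l i => ∏ v ∈ Finset.Icc (i + 1) (i + r l * n), a l v with hP
  have hP0 : ∀ l i, P l i ≠ 0 := by
    intro l i
    rw [hP]
    exact Finset.prod_ne_zero_iff.mpr (fun v hv => ha0 l v (by
      simp only [Finset.mem_Icc] at hv; omega))
  set w : XX := ∑ l' : Fin N, ∑ i ∈ Finset.range (q+1),
      lp.single 2 (i + r l' * n) (η l' i / P l' i) with hw
  set lam : ℂ := (((‖w‖ + 1)/ε : ℝ) : ℂ) with hlam
  have hlamabs : ‖lam‖ = (‖w‖+1)/ε := by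
    rw [hlam, Complex.norm_real, Real.norm_eq_abs, abs_of_pos (by positivity)]
  have hlam0 : lam ≠ 0 := by
    intro h
    rw [h] at hlamabs
    have hp : 0 < (‖w‖ + 1)/ε := by positivity
    simp at hlamabs
    linarith
  refine ⟨x₀ + lam⁻¹ • w, lam, ?_, ?_⟩
  · rw [add_sub_cancel_left, norm_smul]
    have hni : ‖lam⁻¹‖ = ε / (‖w‖+1) := by
      rw [norm_inv, hlamabs, inv_div]
    rw [hni]
    have h1 : 0 < ‖w‖ + 1 := by positivity
    rw [div_mul_eq_mul_div, div_lt_iff₀ h1]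
    nlinarith [norm_nonneg w]
  · intro l
    set M := r l * n with hM
    have hTl := hT l
    -- T^M x₀ = 0
    have hx₀0 : (T l ^ M) x₀ = 0 := by
      rw [hx₀, map_sum]
      refine Finset.sum_eq_zero (fun i hi => ?_)
      refine pow_single_lt hTl _ ?_
      simp only [Finset.mem_range] at hi
      have := hr1 l
      calc i < n := by omega
        _ ≤ r l * n := Nat.le_mul_of_pos_left n (by omega)
    have hz : lam • ((T l ^ M) (x₀ + lam⁻¹ • w)) = (T l ^ M) w := by
      rw [map_add, hx₀0, zero_add, map_smul, smul_smul, mul_inv_cancel₀ hlam0, one_smul]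
    rw [hz]
    -- expand T^M w
    set A : Fin N → XX := fun l' => ∑ i ∈ Finset.range (q+1),
        (T l ^ M) (lp.single 2 (i + r l' * n) (η l' i / P l' i)) with hA
    have hTw : (T l ^ M) w = ∑ l' : Fin N, A l' := by
      rw [hw, map_sum]
      exact Finset.sum_congr rfl (fun l' _ => by rw [map_sum])
    have hAl : A l = ∑ i ∈ Finset.range (q+1), lp.single 2 i (η l i) := by
      rw [hA]
      refine Finset.sum_congr rfl (fun i hi => ?_)
      rw [pow_single_le hTl _ (by omega : M ≤ i + r l * n)]
      congr 1
      · omega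
      · rw [show i + r l * n - M = i from by omega]
        rw [show (∏ v ∈ Finset.Icc (i+1) (i + r l * n), a l v) = P l i from rfl]
        rw [mul_div_assoc']
        exact mul_div_cancel_left₀ _ (hP0 l i)
    have hAlt : ∀ l' : Fin N, l' < l → A l' = 0 := by
      intro l' hl'
      rw [hA]
      refine Finset.sum_eq_zero (fun i hi => ?_)
      refine pow_single_lt hTl _ ?_
      simp only [Finset.mem_range] at hi
      have h1 : r l' + 1 ≤ r l := hr hl'
      have h2 : r l' * n + n ≤ r l * n := by
        calc r l' * n + n = (r l' + 1) * n := by ring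
          _ ≤ r l * n := Nat.mul_le_mul_right n h1
      omega
    have hAgt : ∀ l' : Fin N, l < l' → ‖A l'‖ ≤ (∑ i ∈ Finset.range (q+1), ‖η l' i‖) * ε' := by
      intro l' hl'
      rw [hA]
      refine le_trans (norm_sum_le _ _) ?_
      rw [Finset.sum_mul]
      refine Finset.sum_le_sum (fun i hi => ?_)
      simp only [Finset.mem_range] at hi
      have hrr : r l ≤ r l' := le_of_lt (hr hl')
      have hMle : M ≤ i + r l' * n := by
        have : r l * n ≤ r l' * n := Nat.mul_le_mul_right n hrr
        omega
      rw [pow_single_le hTl _ hMle, norm_single']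
      have hidx : i + r l' * n - M = i + (r l' - r l) * n := by
        have h1 : (r l' - r l) * n = r l' * n - r l * n := Nat.sub_mul _ _ _
        have h2 : r l * n ≤ r l' * n := Nat.mul_le_mul_right n hrr
        omega
      rw [hidx]
      have hcoef : (∏ v ∈ Finset.Icc (i + (r l' - r l) * n + 1) (i + r l' * n), a l v) * (η l' i / P l' i)
          = η l' i * ((P l' i)⁻¹ * ∏ v ∈ Finset.Icc (i + (r l' - r l) * n + 1) (i + r l' * n), a l v) := by
        field_simp
      rw [hcoef, norm_mul]
      have hRle : RR r a i l l' n ≤ ε' := hratio i (by omega) l l' hl'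
      rw [RR] at hRle
      exact mul_le_mul_of_nonneg_left hRle (norm_nonneg _)
    -- assemble
    rw [hTw, ← Finset.add_sum_erase _ _ (Finset.mem_univ l), hAl, add_sub_cancel_left]
    refine le_trans (norm_sum_le _ _) ?_
    rw [Finset.sum_mul]
    refine le_trans (Finset.sum_le_sum (g := fun l' => (∑ i ∈ Finset.range (q+1), ‖η l' i‖) * ε') ?_) ?_
    · intro l' hl'
      have hne : l' ≠ l := Finset.ne_of_mem_erase hl'
      rcases lt_or_gt_of_ne hne with h | h
      · rw [hAlt l' h, norm_zero]
        exact mul_nonneg (Finset.sum_nonneg fun i _ => norm_nonneg _) hε'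
      · exact hAgt l' h
    · refine Finset.sum_le_sum_of_subset_of_nonneg (Finset.erase_subset _ _) ?_
      intro l' _ _
      exact mul_nonneg (Finset.sum_nonneg fun i _ => norm_nonneg _) hε'
end Core

section S
variable {N : ℕ} {r : Fin N → ℕ} {a : Fin N → ℕ → ℂ}

lemma choose_n
    (hseq : ∃ nseq : ℕ → ℕ, StrictMono nseq ∧ (∀ k, 1 ≤ nseq k) ∧
      ∀ i : ℕ, ∀ s l : Fin N, s < l → Tendsto (fun k => RR r a i s l (nseq k)) atTop (𝓝 0))
    (q : ℕ) {ε' : ℝ} (hε' : 0 < ε') :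
    ∃ n, q < n ∧ ∀ i ≤ q, ∀ s l : Fin N, s < l → RR r a i s l n ≤ ε' := by
  obtain ⟨ns, hmono, h1, htend⟩ := hseq
  have hev : ∀ᶠ k in atTop, ∀ i ∈ Finset.range (q+1), ∀ s l : Fin N, s < l →
      RR r a i s l (ns k) ≤ ε' := by
    rw [eventually_all_finset]
    intro i _
    rw [eventually_all]
    intro s
    rw [eventually_all]
    intro l
    by_cases h : s < l
    · filter_upwards [(htend i s l h).eventually_lt_const hε'] with k hk
      exact fun _ => le_of_lt hk
    · exact Eventually.of_forall (fun k hc => absurd hc h)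
  obtain ⟨k₀, hk₀⟩ := Filter.eventually_atTop.mp hev
  refine ⟨ns (max k₀ (q+1)), ?_, ?_⟩
  · have : max k₀ (q+1) ≤ ns (max k₀ (q+1)) := hmono.le_apply
    omega
  · intro i hi s l hsl
    exact hk₀ _ (le_max_left _ _) i (Finset.mem_range.mpr (by omega)) s l hsl
end S
section Suffic
variable {N : ℕ} {r : Fin N → ℕ} {a : Fin N → ℕ → ℂ} {T : Fin N → XX →L[ℂ] XX}
  (hr1 : ∀ l, 1 ≤ r l) (hr : StrictMono r)
  (ha0 : ∀ (l : Fin N) (m : ℕ), 1 ≤ m → a l m ≠ 0)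
  (hT : ∀ (l : Fin N) (x : XX) (j : ℕ),
      (T l x : ∀ _ : ℕ, ℂ) j = a l (j + 1) * (x : ∀ _ : ℕ, ℂ) (j + 1))

include hr1 hr ha0 hT in
lemma suffic
    (hseq : ∃ nseq : ℕ → ℕ, StrictMono nseq ∧ (∀ k, 1 ≤ nseq k) ∧
      ∀ i : ℕ, ∀ s l : Fin N, s < l → Tendsto (fun k => RR r a i s l (nseq k)) atTop (𝓝 0)) :
    Dense {x : XX | Dense (Set.range fun p : ℂ × ℕ =>
        fun l : Fin N => p.1 • (((T l) ^ (r l * p.2)) x))} := by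
  classical
  haveI := sep_XX
  haveI : SecondCountableTopology XX := UniformSpace.secondCountable_of_separable XX
  obtain ⟨b, hbcount, hbne, hbasis⟩ := TopologicalSpace.exists_countable_basis (Fin N → XX)
  haveI := hbcount.to_subtype
  set F : XX → ℂ × ℕ → (Fin N → XX) :=
    fun x p => fun l => p.1 • (((T l) ^ (r l * p.2)) x) with hF
  set O : b → Set XX := fun B => ⋃ p : ℂ × ℕ, (fun x => F x p) ⁻¹' (B : Set (Fin N → XX)) with hO
  have hopen : ∀ B, IsOpen (O B) := by
    intro B
    refine isOpen_iUnion (fun p => ?_)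
    refine (hbasis.isOpen B.2).preimage ?_
    exact continuous_pi (fun l => ((T l ^ (r l * p.2)).continuous).const_smul p.1)
  have hdense : ∀ B, Dense (O B) := by
    rintro ⟨B, hB⟩
    have hBne : B.Nonempty := by
      rw [Set.nonempty_iff_ne_empty]
      rintro rfl; exact hbne hB
    obtain ⟨y, hy⟩ := hBne
    obtain ⟨δ, hδ, hball⟩ := Metric.isOpen_iff.mp (hbasis.isOpen hB) y hy
    rw [Metric.dense_iff]
    intro u ε hε
    -- finitely supported approximations
    obtain ⟨q₀, hq₀⟩ := approx_fin u (half_pos hε)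
    have hql : ∀ l : Fin N, ∃ ql : ℕ, ∀ q ≥ ql,
        ‖y l - ∑ i ∈ Finset.range (q+1), lp.single 2 i ((y l : ∀ _ : ℕ, ℂ) i)‖ < δ/2 :=
      fun l => approx_fin (y l) (half_pos hδ)
    choose ql hqlspec using hql
    set q : ℕ := max q₀ (Finset.univ.sup ql) with hq
    have hq₀' : ‖u - ∑ i ∈ Finset.range (q+1), lp.single 2 i ((u : ∀ _ : ℕ, ℂ) i)‖ < ε/2 :=
      hq₀ q (le_max_left _ _)
    have hql' : ∀ l, ‖y l - ∑ i ∈ Finset.range (q+1), lp.single 2 i ((y l : ∀ _ : ℕ, ℂ) i)‖ < δ/2 := by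
      intro l
      refine hqlspec l q (le_trans ?_ (le_max_right _ _))
      exact Finset.le_sup (Finset.mem_univ l)
    set η : Fin N → ℕ → ℂ := fun l i => (y l : ∀ _ : ℕ, ℂ) i with hη
    set C : ℝ := ∑ l' : Fin N, ∑ i ∈ Finset.range (q+1), ‖η l' i‖ with hC
    have hC0 : 0 ≤ C := Finset.sum_nonneg fun l' _ =>
      Finset.sum_nonneg fun i _ => norm_nonneg _
    set ε' : ℝ := δ / (2 * (C + 1)) with hε'def
    have hε'pos : 0 < ε' := by positivity
    obtain ⟨n, hnq, hrat⟩ := choose_n ⟨_, hseq.choose_spec.1, hseq.choose_spec.2.1,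
      hseq.choose_spec.2.2⟩ q hε'pos
    obtain ⟨z, lam, hz1, hz2⟩ := core hr1 hr ha0 hT q (fun i => (u : ∀ _ : ℕ, ℂ) i) η
      (half_pos hε) (le_of_lt hε'pos) hnq hrat
    refine ⟨z, ?_, ?_⟩
    · rw [Metric.mem_ball, dist_eq_norm]
      calc ‖z - u‖ ≤ ‖z - ∑ i ∈ Finset.range (q+1), lp.single 2 i ((u : ∀ _ : ℕ, ℂ) i)‖
          + ‖(∑ i ∈ Finset.range (q+1), lp.single 2 i ((u : ∀ _ : ℕ, ℂ) i)) - u‖ := by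
            simpa using norm_sub_le_norm_sub_add_norm_sub z _ u
        _ < ε/2 + ε/2 := by
            refine add_lt_add hz1 ?_
            rw [← norm_neg, neg_sub]
            exact hq₀'
        _ = ε := by ring
    · rw [hO]
      refine Set.mem_iUnion.mpr ⟨(lam, n), ?_⟩
      refine hball ?_
      rw [Metric.mem_ball]
      rw [dist_pi_lt_iff hδ]
      intro l
      rw [dist_eq_norm]
      have h1 := hz2 l
      have hCε' : C * ε' < δ/2 := by
        have h2 : 0 < C + 1 := by linarith
        have heq : C * (δ / (2 * (C+1))) = (δ/2) * (C/(C+1)) := by field_simp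
        rw [show ε' = δ/(2*(C+1)) from rfl, heq]
        have hlt : C/(C+1) < 1 := (div_lt_one h2).mpr (by linarith)
        calc (δ/2) * (C/(C+1)) < (δ/2) * 1 := by
              exact mul_lt_mul_of_pos_left hlt (half_pos hδ)
          _ = δ/2 := mul_one _
      calc ‖F z (lam, n) l - y l‖
          ≤ ‖F z (lam, n) l - ∑ i ∈ Finset.range (q+1), lp.single 2 i (η l i)‖
            + ‖(∑ i ∈ Finset.range (q+1), lp.single 2 i (η l i)) - y l‖ := by
              simpa using norm_sub_le_norm_sub_add_norm_sub _ _ _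
        _ ≤ C * ε' + ‖(∑ i ∈ Finset.range (q+1), lp.single 2 i (η l i)) - y l‖ := by
              exact add_le_add_left h1 _
        _ < δ/2 + δ/2 := by
              refine add_lt_add_of_le_of_lt (le_of_lt hCε') ?_
              rw [← norm_neg, neg_sub]
              exact hql' l
        _ = δ := by ring
  have hdint : Dense (⋂ B : b, O B) := dense_iInter_of_isOpen hopen hdense
  refine hdint.mono ?_
  intro x hx
  simp only [Set.mem_iInter] at hx
  simp only [Set.mem_setOf_eq]
  rw [hbasis.dense_iff]
  intro o ho hone
  obtain ⟨p, hp⟩ := Set.mem_iUnion.mp (hx ⟨o, ho⟩)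
  exact ⟨F x p, hp, Set.mem_range_self p⟩
end Suffic
section Nec
variable {N : ℕ} {r : Fin N → ℕ} {a : Fin N → ℕ → ℂ} {T : Fin N → XX →L[ℂ] XX}
  (hN : 2 ≤ N)
  (hr1 : ∀ l, 1 ≤ r l) (hr : StrictMono r)
  (ha0 : ∀ (l : Fin N) (m : ℕ), 1 ≤ m → a l m ≠ 0)
  (hT : ∀ (l : Fin N) (x : XX) (j : ℕ),
      (T l x : ∀ _ : ℕ, ℂ) j = a l (j + 1) * (x : ∀ _ : ℕ, ℂ) (j + 1))

include hN hr1 hr ha0 hT in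
lemma key (x : XX)
    (hx : Dense (Set.range fun p : ℂ × ℕ => fun l : Fin N => p.1 • (((T l) ^ (r l * p.2)) x)))
    (K q : ℕ) {δ : ℝ} (hδ : 0 < δ) (hδ2 : δ ≤ 1/2) :
    ∃ n > K, ∀ i ≤ q, ∀ s l : Fin N, s < l → RR r a i s l n ≤ 2*δ := by
  classical
  set K' := max K q with hK'
  set w : ℕ → (Fin N → XX) := fun n => fun l => ((T l) ^ (r l * n)) x with hw
  set y : Fin N → XX := fun _ => ∑ i ∈ Finset.range (q+1), lp.single 2 i (1:ℂ) with hy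
  -- each span is closed with dense complement
  have hclosed : ∀ m : ℕ, IsClosed (↑(Submodule.span ℂ {w m}) : Set (Fin N → XX)) :=
    fun m => Submodule.closed_of_finiteDimensional _
  have hdensec : ∀ m : ℕ, Dense ((↑(Submodule.span ℂ {w m}) : Set (Fin N → XX))ᶜ) := by
    intro m
    rw [← interior_eq_empty_iff_dense_compl]
    by_contra hne
    rw [← Ne, ← Set.nonempty_iff_ne_empty] at hne
    have htop := Submodule.eq_top_of_nonempty_interior' _ hne
    -- contradiction: two non-parallel vectors
    set l₀ : Fin N := ⟨0, by omega⟩ with hl₀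
    have hg0mem : (fun _ : Fin N => (lp.single 2 0 (1:ℂ) : XX)) ∈ Submodule.span ℂ {w m} :=
      htop ▸ Submodule.mem_top
    have hg1mem : (fun _ : Fin N => (lp.single 2 1 (1:ℂ) : XX)) ∈ Submodule.span ℂ {w m} :=
      htop ▸ Submodule.mem_top
    obtain ⟨α, hα⟩ := Submodule.mem_span_singleton.mp hg0mem
    obtain ⟨β, hβ⟩ := Submodule.mem_span_singleton.mp hg1mem
    have hαl : α • (w m l₀) = (lp.single 2 0 (1:ℂ) : XX) := by
      have := congrFun hα l₀; exact this
    have hβl : β • (w m l₀) = (lp.single 2 1 (1:ℂ) : XX) := by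
      have := congrFun hβ l₀; exact this
    have hα0 : α * ((w m l₀ : ∀ _ : ℕ, ℂ) 0) = 1 := by
      have h1 := congrFun (congrArg (fun (v : XX) => (v : ∀ _ : ℕ, ℂ)) hαl) 0
      simp only [lp.coeFn_smul, Pi.smul_apply, smul_eq_mul, single_apply'] at h1
      simpa using h1
    have hα1 : α * ((w m l₀ : ∀ _ : ℕ, ℂ) 1) = 0 := by
      have h1 := congrFun (congrArg (fun (v : XX) => (v : ∀ _ : ℕ, ℂ)) hαl) 1
      simp only [lp.coeFn_smul, Pi.smul_apply, smul_eq_mul, single_apply'] at h1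
      simpa using h1
    have hβ1 : β * ((w m l₀ : ∀ _ : ℕ, ℂ) 1) = 1 := by
      have h1 := congrFun (congrArg (fun (v : XX) => (v : ∀ _ : ℕ, ℂ)) hβl) 1
      simp only [lp.coeFn_smul, Pi.smul_apply, smul_eq_mul, single_apply'] at h1
      simpa using h1
    have hαne : α ≠ 0 := by
      intro h; rw [h, zero_mul] at hα0; exact zero_ne_one hα0
    have hw1 : (w m l₀ : ∀ _ : ℕ, ℂ) 1 = 0 := by
      rcases mul_eq_zero.mp hα1 with h | h
      · exact absurd h hαne
      · exact h
    rw [hw1, mul_zero] at hβ1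
    exact zero_ne_one hβ1
  -- the good open set
  have hball : (Metric.ball y δ).Nonempty := ⟨y, Metric.mem_ball_self hδ⟩
  set D : Set (Fin N → XX) := ⋂ m : Fin (K'+1), (↑(Submodule.span ℂ {w (m:ℕ)}) : Set (Fin N → XX))ᶜ with hD
  have hDopen : IsOpen D := isOpen_iInter_of_finite (fun m => (hclosed m).isOpen_compl)
  have hDdense : Dense D := dense_iInter_of_isOpen
    (fun m => (hclosed (m:ℕ)).isOpen_compl) (fun m => hdensec (m:ℕ))
  have hVopen : IsOpen (Metric.ball y δ ∩ D) := Metric.isOpen_ball.inter hDopen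
  have hVne : (Metric.ball y δ ∩ D).Nonempty :=
    hDdense.inter_open_nonempty _ Metric.isOpen_ball hball
  obtain ⟨g, hgV, hgrange⟩ := hx.inter_open_nonempty _ hVopen hVne
  obtain ⟨p, hp⟩ := hgrange
  obtain ⟨hgball, hgD⟩ := hgV
  set lam := p.1 with hlam
  set n := p.2 with hn
  -- n > K'
  have hnK : n > K' := by
    by_contra hle
    push_neg at hle
    have hmem : g ∈ (↑(Submodule.span ℂ {w n}) : Set (Fin N → XX)) := by
      rw [← hp]
      exact Submodule.smul_mem _ lam (Submodule.mem_span_singleton_self (w n))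
    have := Set.mem_iInter.mp hgD ⟨n, by omega⟩
    exact this hmem
  refine ⟨n, by omega, ?_⟩
  intro i hi s l hsl
  -- coordinate estimates
  have hdist := Metric.mem_ball.mp hgball
  rw [dist_pi_lt_iff hδ] at hdist
  have hcoord : ∀ (l' : Fin N) (j : ℕ),
      ‖(lam * ((∏ v ∈ Finset.Icc (j+1) (j + r l' * n), a l' v) * (x : ∀ _ : ℕ, ℂ) (j + r l' * n))
        - ((y l' : ∀ _ : ℕ, ℂ) j))‖ < δ := by
    intro l' j
    have h1 := hdist l'
    rw [dist_eq_norm] at h1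
    have h2 := coord_le_norm (g l' - y l') j
    have h3 : ((g l' - y l' : XX) : ∀ _ : ℕ, ℂ) j = (g l' : ∀ _ : ℕ, ℂ) j - (y l' : ∀ _ : ℕ, ℂ) j := by
      rw [lp.coeFn_sub]; rfl
    have h4 : (g l' : ∀ _ : ℕ, ℂ) j
        = lam * ((∏ v ∈ Finset.Icc (j+1) (j + r l' * n), a l' v) * (x : ∀ _ : ℕ, ℂ) (j + r l' * n)) := by
      rw [← hp]
      show ((lam • (((T l') ^ (r l' * n)) x) : XX) : ∀ _ : ℕ, ℂ) j = _
      rw [lp.coeFn_smul, Pi.smul_apply, smul_eq_mul, wshift_pow_apply (hT l')]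
    rw [h3, h4] at h2
    exact lt_of_le_of_lt h2 h1
  -- coordinate values of y
  have hyval : ∀ (l' : Fin N) (j : ℕ), (y l' : ∀ _ : ℕ, ℂ) j = if j ≤ q then 1 else 0 := by
    intro l' j
    rw [hy]
    rw [lp.coeFn_sum]
    rw [Finset.sum_apply]
    have : ∀ i' ∈ Finset.range (q+1), (lp.single 2 i' (1:ℂ) : ∀ _ : ℕ, ℂ) j
        = if j = i' then 1 else 0 := fun i' _ => single_apply' i' 1 j
    rw [Finset.sum_congr rfl this, Finset.sum_ite_eq (Finset.range (q+1)) j (fun _ => (1:ℂ))]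
    rcases le_or_gt j q with h | h
    · rw [if_pos (Finset.mem_range.mpr (by omega)), if_pos h]
    · rw [if_neg (by simp; omega), if_neg (by omega)]
  -- the two estimates
  set P : ℂ := ∏ v ∈ Finset.Icc (i+1) (i + r l * n), a l v with hP
  set xc : ℂ := (x : ∀ _ : ℕ, ℂ) (i + r l * n) with hxc
  have hest1 : ‖lam * (P * xc) - 1‖ < δ := by
    have := hcoord l i
    rwa [hyval l i, if_pos hi] at this
  have hrsl : r s < r l := hr hsl
  set j : ℕ := i + (r l - r s) * n with hj
  have hjq : ¬ (j ≤ q) := by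
    have h1 : (r l - r s) ≥ 1 := by omega
    have h2 : (r l - r s) * n ≥ n := Nat.le_mul_of_pos_left n (by omega)
    omega
  have hjrs : j + r s * n = i + r l * n := by
    have h1 : (r l - r s) * n = r l * n - r s * n := Nat.sub_mul _ _ _
    have h2 : r s * n ≤ r l * n := Nat.mul_le_mul_right n (le_of_lt hrsl)
    omega
  set Q : ℂ := ∏ v ∈ Finset.Icc (i + (r l - r s) * n + 1) (i + r l * n), a s v with hQ
  have hest2 : ‖lam * (Q * xc)‖ < δ := by
    have := hcoord s j
    rw [hyval s j, if_neg hjq, sub_zero] at this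
    rw [hj] at this
    rw [show i + (r l - r s) * n + r s * n = i + r l * n from by omega] at this
    exact this
  have hP0 : P ≠ 0 := by
    rw [hP]
    exact Finset.prod_ne_zero_iff.mpr (fun v hv => ha0 l v (by
      simp only [Finset.mem_Icc] at hv; omega))
  -- conclude
  have hA : 1 - δ ≤ ‖lam * (P * xc)‖ := by
    have := norm_sub_norm_le (1 : ℂ) (1 - lam * (P * xc))
    simp only [norm_one] at this
    have h2 : ‖1 - (1 - lam * (P * xc))‖ = ‖lam * (P * xc)‖ := by
      congr 1; ring
    rw [h2] at this
    have h3 : ‖1 - lam * (P * xc)‖ = ‖lam * (P * xc) - 1‖ := by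
      rw [← norm_neg]; congr 1; ring
    rw [h3] at this
    linarith
  have hmul : RR r a i s l n * ‖lam * (P * xc)‖ = ‖lam * (Q * xc)‖ := by
    rw [RR, ← hP, ← hQ, ← norm_mul]
    congr 1
    field_simp
  have hRR0 : 0 ≤ RR r a i s l n := norm_nonneg _
  nlinarith [hmul, hA, hest2, hRR0]
end Nec
section NecFin
variable {N : ℕ} {r : Fin N → ℕ} {a : Fin N → ℕ → ℂ} {T : Fin N → XX →L[ℂ] XX}
  (hN : 2 ≤ N)
  (hr1 : ∀ l, 1 ≤ r l) (hr : StrictMono r)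
  (ha0 : ∀ (l : Fin N) (m : ℕ), 1 ≤ m → a l m ≠ 0)
  (hT : ∀ (l : Fin N) (x : XX) (j : ℕ),
      (T l x : ∀ _ : ℕ, ℂ) j = a l (j + 1) * (x : ∀ _ : ℕ, ℂ) (j + 1))

include hN hr1 hr ha0 hT in
lemma neccessary
    (hD : Dense {x : XX | Dense (Set.range fun p : ℂ × ℕ =>
        fun l : Fin N => p.1 • (((T l) ^ (r l * p.2)) x))}) :
    ∃ n : ℕ → ℕ, StrictMono n ∧ (∀ k, 1 ≤ n k) ∧
      ∀ i : ℕ, ∀ s l : Fin N, s < l →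
        Tendsto (fun k => RR r a i s l (n k)) atTop (𝓝 0) := by
  obtain ⟨x, hx⟩ := hD.nonempty
  simp only [Set.mem_setOf_eq] at hx
  have step : ∀ (K q k : ℕ), ∃ n, n > K ∧ ∀ i ≤ q, ∀ s l : Fin N, s < l →
      RR r a i s l n ≤ 1/(k+1) := by
    intro K q k
    have hδpos : (0:ℝ) < 1/(2*(k+1)) := by positivity
    have hδle : (1:ℝ)/(2*(↑k+1)) ≤ 1/2 := by
      rw [div_le_div_iff₀ (by positivity) (by norm_num)]
      have : (0:ℝ) ≤ (k:ℝ) := Nat.cast_nonneg k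
      nlinarith
    obtain ⟨n, hn1, hn2⟩ := key hN hr1 hr ha0 hT x hx K q hδpos hδle
    refine ⟨n, hn1, fun i hi s l hsl => ?_⟩
    calc RR r a i s l n ≤ 2*(1/(2*(↑k+1))) := hn2 i hi s l hsl
      _ = 1/(↑k+1) := by
          field_simp
  choose Φ hΦ1 hΦ2 using step
  set g : ℕ → ℕ := fun k => Nat.rec (Φ 0 0 0) (fun k gk => Φ (max gk k) (k+1) (k+1)) k with hg
  have hgsucc : ∀ k, g (k+1) = Φ (max (g k) k) (k+1) (k+1) := fun k => rfl
  have hmono : StrictMono g := by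
    apply strictMono_nat_of_lt_succ
    intro k
    rw [hgsucc]
    have := hΦ1 (max (g k) k) (k+1) (k+1)
    omega
  have h1 : ∀ k, 1 ≤ g k := by
    intro k
    cases k with
    | zero =>
        have := hΦ1 0 0 0
        have hg0 : g 0 = Φ 0 0 0 := rfl
        omega
    | succ k =>
        have := hΦ1 (max (g k) k) (k+1) (k+1)
        rw [hgsucc]
        omega
  refine ⟨g, hmono, h1, ?_⟩
  intro i s l hsl
  have hbound : ∀ᶠ k in atTop, RR r a i s l (g k) ≤ 1/(k+1) := by
    rw [eventually_atTop]
    refine ⟨i+1, ?_⟩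
    intro k hk
    obtain ⟨m, rfl⟩ : ∃ m, k = m + 1 := ⟨k - 1, by omega⟩
    rw [hgsucc]
    exact hΦ2 (max (g m) m) (m+1) (m+1) i (by omega) s l hsl
  refine squeeze_zero' (Eventually.of_forall (fun k => norm_nonneg _)) hbound ?_
  exact tendsto_one_div_add_atTop_nhds_zero_nat
end NecFin

theorem stmt8
    {N : ℕ} (hN : 2 ≤ N)
    (r : Fin N → ℕ) (hr1 : ∀ l, 1 ≤ r l) (hr : StrictMono r)
    (a : Fin N → ℕ → ℂ) (ha0 : ∀ (l : Fin N) (m : ℕ), 1 ≤ m → a l m ≠ 0)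
    (hab : ∀ l : Fin N, ∃ C : ℝ, ∀ m : ℕ, 1 ≤ m → ‖a l m‖ ≤ C)
    (e : ℕ → lp (fun _ : ℕ => ℂ) 2)
    (he : ∀ i j : ℕ, (e i : ∀ _ : ℕ, ℂ) j = if j = i then 1 else 0)
    (T : Fin N → lp (fun _ : ℕ => ℂ) 2 →L[ℂ] lp (fun _ : ℕ => ℂ) 2)
    (hT : ∀ (l : Fin N) (x : lp (fun _ : ℕ => ℂ) 2) (j : ℕ),
      (T l x : ∀ _ : ℕ, ℂ) j = a l (j + 1) * (x : ∀ _ : ℕ, ℂ) (j + 1)) :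
    Dense {x : lp (fun _ : ℕ => ℂ) 2 | Dense (Set.range fun p : ℂ × ℕ =>
        fun l : Fin N => p.1 • (((T l) ^ (r l * p.2)) x))}
      ↔
    ∃ n : ℕ → ℕ, StrictMono n ∧ (∀ k, 1 ≤ n k) ∧
      ∀ i : ℕ, ∀ s l : Fin N, s < l →
        Tendsto (fun k => ‖
            ((∏ v ∈ Finset.Icc (i + 1) (i + r l * n k), a l v)⁻¹ *
              ∏ v ∈ Finset.Icc (i + (r l - r s) * n k + 1) (i + r l * n k), a s v)‖)
          atTop (𝓝 0) := by
  constructor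
  · intro hD
    obtain ⟨n, h1, h2, h3⟩ := neccessary hN hr1 hr ha0 hT hD
    exact ⟨n, h1, h2, fun i s l hsl => h3 i s l hsl⟩
  · rintro ⟨n, h1, h2, h3⟩
    exact suffic hr1 hr ha0 hT ⟨n, h1, h2, fun i s l hsl => h3 i s l hsl⟩
end
end

section
/- For each s ∈ ℕ let C_s = {2^{2s+1}−(2s+1), …, 2^{2s+1}−1} and D_s = {2^{2s+1}, …, 2^{2s+1}+(2s+1)−1}, and set C = ∪_{s≥0} C_s, D = ∪_{s≥0} D_s, E = {−2^{2s+1} : s ∈ ℕ}. Define positive invertible diagonal operators (A_n)_{n∈ℤ} on K by: if n ∈ C then A_n f_k = (1/2) f_k for 0 ≤ k ≤ n and A_n f_k = f_k for k > n; if n ∈ D then A_n f_k = 2 f_k for 0 ≤ k ≤ n and A_n f_k = f_k for k > n; if n ∈ E then A_n f_k = 2 f_k for 0 ≤ k ≤ −n and A_n f_k = f_k for k > −n; and A_n f_k = f_k for all k if n ∈ ℤ \ (C ∪ D ∪ E). Let T be the bilateral forward operator weighted shift on ℓ²(ℤ,K) with weight sequence (A_n)_{n∈ℤ}. Then T and T²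 are not d-hypercyclic: there exists no x ∈ ℓ²(ℤ,K) such that {(T^n x, T^{2n} x) : n ∈ ℕ} is dense in ℓ²(ℤ,K)². -/
open Filter Topology

/-- `C = ⋃ₛ {2^{2s+1} - (2s+1), …, 2^{2s+1} - 1}` as a set of integers. -/
def Cset : Set ℤ :=
  ⋃ s : ℕ, Set.Icc ((2 : ℤ) ^ (2 * s + 1) - (2 * s + 1)) ((2 : ℤ) ^ (2 * s + 1) - 1)

/-- `D = ⋃ₛ {2^{2s+1}, …, 2^{2s+1} + (2s+1) - 1}` as a set of integers. -/
def Dset : Set ℤ :=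
  ⋃ s : ℕ, Set.Icc ((2 : ℤ) ^ (2 * s + 1)) ((2 : ℤ) ^ (2 * s + 1) + (2 * s + 1) - 1)

/-- `E = {-2^{2s+1} : s ∈ ℕ}` as a set of integers. -/
def Eset : Set ℤ := Set.range fun s : ℕ => -(2 : ℤ) ^ (2 * s + 1)

noncomputable section Aux

open scoped Classical

/-- Center of block `s`. -/
def Pb (s : ℕ) : ℤ := 2 ^ (2 * s + 1)
/-- Left end of block `s`. -/
def Lb (s : ℕ) : ℤ := Pb s - (2 * s + 1)
/-- Right end of block `s`. -/
def Rb (s : ℕ) : ℤ := Pb s + (2 * s + 1) - 1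

lemma twopow_gt (s : ℕ) : (2 * s + 1 : ℤ) < Pb s := by
  have h : (2 * s + 1 : ℕ) < 2 ^ (2 * s + 1) := Nat.lt_two_pow_self
  have := (Int.ofNat_lt).2 h
  simpa [Pb] using this

lemma Lb_ge_one (s : ℕ) : 1 ≤ Lb s := by
  have := twopow_gt s; unfold Lb; omega

lemma Lb_le_Rb (s : ℕ) : Lb s ≤ Rb s := by unfold Lb Rb; omega

lemma Lb_le_Pb (s : ℕ) : Lb s ≤ Pb s - 1 := by unfold Lb; omega

lemma Pb_le_Rb (s : ℕ) : Pb s ≤ Rb s := by unfold Rb; omega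

lemma Pb_mono : StrictMono Pb := by
  intro a b h
  exact pow_lt_pow_right₀ (by norm_num) (by omega)

lemma Rb_lt_Lb_succ (s : ℕ) : Rb s < Lb (s + 1) := by
  have h4 : Pb (s + 1) = 4 * Pb s := by
    unfold Pb; rw [show 2 * (s + 1) + 1 = (2 * s + 1) + 2 by ring, pow_add]; ring
  have := twopow_gt s
  unfold Lb Rb at *
  push_cast
  push_cast at h4 ⊢
  omega

lemma Lb_mono : StrictMono Lb := by
  apply strictMono_nat_of_lt_succ
  intro s
  exact lt_of_le_of_lt (Lb_le_Rb s) (Rb_lt_Lb_succ s)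

lemma block_lt {s s' : ℕ} (h : s < s') : Rb s < Lb s' :=
  lt_of_lt_of_le (Rb_lt_Lb_succ s) (Lb_mono.monotone h)

lemma mem_Cset_iff {i : ℤ} : i ∈ Cset ↔ ∃ s : ℕ, Lb s ≤ i ∧ i ≤ Pb s - 1 := by
  simp [Cset, Set.mem_iUnion, Set.mem_Icc, Lb, Pb]

lemma mem_Dset_iff {i : ℤ} : i ∈ Dset ↔ ∃ s : ℕ, Pb s ≤ i ∧ i ≤ Rb s := by
  simp [Dset, Set.mem_iUnion, Set.mem_Icc, Rb, Pb]

lemma Cset_pos {i : ℤ} (h : i ∈ Cset) : 1 ≤ i := by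
  obtain ⟨s, h1, _⟩ := mem_Cset_iff.1 h
  exact le_trans (Lb_ge_one s) h1

lemma Dset_pos {i : ℤ} (h : i ∈ Dset) : 1 ≤ i := by
  obtain ⟨s, h1, _⟩ := mem_Dset_iff.1 h
  have := Lb_ge_one s; have := Lb_le_Pb s; omega

lemma Eset_neg {i : ℤ} (h : i ∈ Eset) : i ≤ -2 := by
  obtain ⟨s, rfl⟩ := h
  have h2 : (2 : ℤ) ^ 1 ≤ 2 ^ (2 * s + 1) := pow_le_pow_right₀ one_le_two (by omega)
  simp only []
  norm_num at h2 ⊢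
  linarith

lemma C_block_unique {s s' : ℕ} {i : ℤ} (h1 : Lb s ≤ i) (h2 : i ≤ Pb s - 1)
    (h3 : Lb s' ≤ i) (h4 : i ≤ Pb s' - 1) : s = s' := by
  by_contra hne
  rcases lt_or_gt_of_ne hne with h | h
  · have := block_lt h; have := Pb_le_Rb s; omega
  · have := block_lt h; have := Pb_le_Rb s'; omega

lemma D_block_unique {s s' : ℕ} {i : ℤ} (h1 : Pb s ≤ i) (h2 : i ≤ Rb s)
    (h3 : Pb s' ≤ i) (h4 : i ≤ Rb s') : s = s' := by
  by_contra hne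
  rcases lt_or_gt_of_ne hne with h | h
  · have := block_lt h; have := Lb_le_Pb s'; unfold Lb at *; omega
  · have := block_lt h; have := Lb_le_Pb s; unfold Lb at *; omega

lemma CD_disjoint {i : ℤ} (hC : i ∈ Cset) (hD : i ∈ Dset) : False := by
  obtain ⟨s, h1, h2⟩ := mem_Cset_iff.1 hC
  obtain ⟨s', h3, h4⟩ := mem_Dset_iff.1 hD
  rcases le_or_gt s s' with h | h
  · have := Pb_mono.monotone h; omega
  · have := block_lt h; have := Lb_le_Pb s; unfold Lb at *; omega

/-- The exponent of the weight at position `i` on basis component `kz`. -/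
def eW (kz : ℤ) (i : ℤ) : ℤ :=
  if i ∈ Cset then (if kz ≤ i then -1 else 0)
  else if i ∈ Dset then (if kz ≤ i then 1 else 0) else 0

/-- Cumulative exponent on `[0, t)`. -/
def Gf (kz t : ℤ) : ℤ := ∑ i ∈ Finset.Ico (0 : ℤ) t, eW kz i

/-- Per-block cumulative exponent. -/
def gb (kz : ℤ) (s : ℕ) (t : ℤ) : ℤ :=
  ∑ i ∈ Finset.Ico (0 : ℤ) t,
    ((if Pb s ≤ i ∧ i ≤ Rb s ∧ kz ≤ i then (1 : ℤ) else 0)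
      - (if Lb s ≤ i ∧ i ≤ Pb s - 1 ∧ kz ≤ i then 1 else 0))

lemma eW_eq_sum {kz : ℤ} {N : ℕ} {i : ℤ} (hi : i < Lb N) :
    eW kz i = ∑ s ∈ Finset.range N,
      ((if Pb s ≤ i ∧ i ≤ Rb s ∧ kz ≤ i then (1 : ℤ) else 0)
        - (if Lb s ≤ i ∧ i ≤ Pb s - 1 ∧ kz ≤ i then 1 else 0)) := by
  by_cases hC : i ∈ Cset
  · obtain ⟨s₀, hs1, hs2⟩ := mem_Cset_iff.1 hC
    have hs₀N : s₀ ∈ Finset.range N := by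
      rw [Finset.mem_range]
      by_contra h
      have : Lb N ≤ Lb s₀ := Lb_mono.monotone (by omega)
      omega
    rw [Finset.sum_eq_single_of_mem s₀ hs₀N]
    · have hnotD : ¬ (Pb s₀ ≤ i ∧ i ≤ Rb s₀ ∧ kz ≤ i) := by
        rintro ⟨a, b, -⟩
        exact CD_disjoint hC (mem_Dset_iff.2 ⟨s₀, a, b⟩)
      simp only [eW, if_pos hC, hnotD, if_false, hs1, hs2, true_and]
      by_cases hk : kz ≤ i <;> simp [hk]
    · intro s _ hne
      have hD : ¬ (Pb s ≤ i ∧ i ≤ Rb s ∧ kz ≤ i) := by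
        rintro ⟨a, b, -⟩
        exact CD_disjoint hC (mem_Dset_iff.2 ⟨s, a, b⟩)
      have hCc : ¬ (Lb s ≤ i ∧ i ≤ Pb s - 1 ∧ kz ≤ i) := by
        rintro ⟨a, b, -⟩
        exact hne (C_block_unique a b hs1 hs2)
      rw [if_neg hD, if_neg hCc, sub_self]
  · by_cases hD : i ∈ Dset
    · obtain ⟨s₀, hs1, hs2⟩ := mem_Dset_iff.1 hD
      have hs₀N : s₀ ∈ Finset.range N := by
        rw [Finset.mem_range]
        by_contra h
        have h1 : Lb N ≤ Lb s₀ := Lb_mono.monotone (by omega)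
        have := Lb_le_Pb s₀
        omega
      rw [Finset.sum_eq_single_of_mem s₀ hs₀N]
      · have hnotC : ¬ (Lb s₀ ≤ i ∧ i ≤ Pb s₀ - 1 ∧ kz ≤ i) := by
          rintro ⟨a, b, -⟩
          exact hC (mem_Cset_iff.2 ⟨s₀, a, b⟩)
        simp only [eW, if_neg hC, if_pos hD, hnotC, if_false, hs1, hs2, true_and]
        by_cases hk : kz ≤ i <;> simp [hk]
      · intro s _ hne
        have hDc : ¬ (Pb s ≤ i ∧ i ≤ Rb s ∧ kz ≤ i) := by
          rintro ⟨a, b, -⟩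
          exact hne (D_block_unique a b hs1 hs2)
        have hCc : ¬ (Lb s ≤ i ∧ i ≤ Pb s - 1 ∧ kz ≤ i) := by
          rintro ⟨a, b, -⟩
          exact hC (mem_Cset_iff.2 ⟨s, a, b⟩)
        rw [if_neg hDc, if_neg hCc, sub_self]
    · have : ∀ s ∈ Finset.range N,
          ((if Pb s ≤ i ∧ i ≤ Rb s ∧ kz ≤ i then (1 : ℤ) else 0)
            - (if Lb s ≤ i ∧ i ≤ Pb s - 1 ∧ kz ≤ i then 1 else 0)) = 0 := by
        intro s _
        have hDc : ¬ (Pb s ≤ i ∧ i ≤ Rb s ∧ kz ≤ i) := by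
          rintro ⟨a, b, -⟩
          exact hD (mem_Dset_iff.2 ⟨s, a, b⟩)
        have hCc : ¬ (Lb s ≤ i ∧ i ≤ Pb s - 1 ∧ kz ≤ i) := by
          rintro ⟨a, b, -⟩
          exact hC (mem_Cset_iff.2 ⟨s, a, b⟩)
        rw [if_neg hDc, if_neg hCc, sub_self]
      rw [Finset.sum_eq_zero this]
      simp [eW, hC, hD]

lemma Gf_decomp {kz t : ℤ} {N : ℕ} (ht : t ≤ Lb N) :
    Gf kz t = ∑ s ∈ Finset.range N, gb kz s t := by
  unfold Gf gb
  rw [Finset.sum_comm]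
  refine Finset.sum_congr rfl fun i hi => ?_
  rw [Finset.mem_Ico] at hi
  exact eW_eq_sum (by omega)

lemma gb_ge (kz : ℤ) (s : ℕ) (t : ℤ) : -(2 * s + 1 : ℤ) ≤ gb kz s t := by
  unfold gb
  rw [Finset.sum_sub_distrib]
  have h1 : (0 : ℤ) ≤ ∑ i ∈ Finset.Ico (0 : ℤ) t,
      (if Pb s ≤ i ∧ i ≤ Rb s ∧ kz ≤ i then (1 : ℤ) else 0) :=
    Finset.sum_nonneg fun i _ => by positivity
  have h2 : ∑ i ∈ Finset.Ico (0 : ℤ) t,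
      (if Lb s ≤ i ∧ i ≤ Pb s - 1 ∧ kz ≤ i then (1 : ℤ) else 0) ≤ (2 * s + 1 : ℤ) := by
    rw [Finset.sum_boole]
    have hsub : (Finset.Ico (0 : ℤ) t).filter
        (fun i => Lb s ≤ i ∧ i ≤ Pb s - 1 ∧ kz ≤ i) ⊆ Finset.Icc (Lb s) (Pb s - 1) := by
      intro i hi
      rw [Finset.mem_filter] at hi
      rw [Finset.mem_Icc]
      exact ⟨hi.2.1, hi.2.2.1⟩
    have hcard := Finset.card_le_card hsub
    have : (Finset.Icc (Lb s) (Pb s - 1)).card = (2 * s + 1 : ℕ) := by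
      rw [Int.card_Icc]
      unfold Lb
      omega
    rw [this] at hcard
    exact_mod_cast hcard
  omega

lemma gb_zero_of_le {kz t : ℤ} {s : ℕ} (ht : t ≤ Lb s) : gb kz s t = 0 := by
  unfold gb
  apply Finset.sum_eq_zero
  intro i hi
  rw [Finset.mem_Ico] at hi
  have hL := Lb_le_Pb s
  have hDc : ¬ (Pb s ≤ i ∧ i ≤ Rb s ∧ kz ≤ i) := by rintro ⟨a, -, -⟩; omega
  have hCc : ¬ (Lb s ≤ i ∧ i ≤ Pb s - 1 ∧ kz ≤ i) := by rintro ⟨a, -, -⟩; omega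
  rw [if_neg hDc, if_neg hCc, sub_self]

lemma gb_nonneg_of_ge {kz t : ℤ} {s : ℕ} (ht : Rb s + 1 ≤ t) : 0 ≤ gb kz s t := by
  unfold gb
  rw [Finset.sum_sub_distrib, Finset.sum_boole, Finset.sum_boole]
  rw [sub_nonneg]
  have : ((Finset.Ico (0:ℤ) t).filter (fun i => Lb s ≤ i ∧ i ≤ Pb s - 1 ∧ kz ≤ i)).card
      ≤ ((Finset.Ico (0:ℤ) t).filter (fun i => Pb s ≤ i ∧ i ≤ Rb s ∧ kz ≤ i)).card := by
    refine Finset.card_le_card_of_injOn (fun i => i + (2 * s + 1)) ?_ ?_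
    · intro i hi
      simp only [Finset.mem_coe, Finset.mem_filter, Finset.mem_Ico] at hi ⊢
      have h0 := Lb_ge_one s
      unfold Lb Rb at *
      omega
    · intro a _ b _ hab
      simpa using hab
  exact_mod_cast this

lemma gb_neg_window {kz t : ℤ} {s : ℕ} (h : gb kz s t < 0) : Lb s < t ∧ t ≤ Rb s := by
  constructor
  · by_contra hc
    rw [gb_zero_of_le (by omega)] at h
    omega
  · by_contra hc
    have := gb_nonneg_of_ge (kz := kz) (s := s) (t := t) (by omega)
    omega

lemma Lb_ge_self (N : ℕ) : (N : ℤ) + 1 ≤ Lb N := by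
  induction N with
  | zero => simp [Lb, Pb]
  | succ n ih =>
      have h2 := Lb_mono (show n < n + 1 by omega)
      push_cast
      omega

/-- Key window localization: if the cumulative exponent drops below `-M`,
then `t` lies in the window of a block of size at least `M`. -/
lemma windows {kz t M : ℤ} (hM : 1 ≤ M) (hG : Gf kz t ≤ -M) :
    ∃ s : ℕ, M ≤ 2 * s + 1 ∧ Lb s < t ∧ t ≤ Rb s := by
  set N : ℕ := t.toNat with hN
  have htN : t ≤ Lb N := by
    have h1 : t ≤ (N : ℤ) := Int.self_le_toNat t
    have := Lb_ge_self N
    omega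
  have hdec := Gf_decomp (kz := kz) htN
  by_cases hall : ∀ s ∈ Finset.range N, 0 ≤ gb kz s t
  · have : (0 : ℤ) ≤ Gf kz t := hdec ▸ Finset.sum_nonneg hall
    omega
  · push_neg at hall
    obtain ⟨s₀, hs₀N, hs₀⟩ := hall
    have hwin := gb_neg_window hs₀
    have hothers : ∀ s ∈ (Finset.range N).erase s₀, 0 ≤ gb kz s t := by
      intro s hs
      rw [Finset.mem_erase] at hs
      by_contra hneg
      rw [not_le] at hneg
      have hwin' := gb_neg_window hneg
      rcases lt_or_gt_of_ne hs.1 with h | h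
      · have := block_lt h; omega
      · have := block_lt h; omega
    have hGge : gb kz s₀ t ≤ Gf kz t := by
      rw [hdec, ← Finset.add_sum_erase _ _ hs₀N]
      have := Finset.sum_nonneg hothers
      omega
    have := gb_ge kz s₀ t
    exact ⟨s₀, by omega, hwin.1, hwin.2⟩

/-- The diagonal weight of `A i` on the basis vector `f k`. -/
noncomputable def Wt (k : ℕ) (i : ℤ) : ℝ :=
  if i ∈ Cset then (if (k : ℤ) ≤ i then 2⁻¹ else 1)
  else if i ∈ Dset then (if (k : ℤ) ≤ i then 2 else 1)
  else if i ∈ Eset then (if (k : ℤ) ≤ -i then 2 else 1)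
  else 1

lemma Wt_pos (k : ℕ) (i : ℤ) : 0 < Wt k i := by
  unfold Wt; split_ifs <;> norm_num

lemma Wt_le_two (k : ℕ) (i : ℤ) : Wt k i ≤ 2 := by
  unfold Wt; split_ifs <;> norm_num

lemma Wt_one_le_of_neg (k : ℕ) {i : ℤ} (hi : i < 0) : 1 ≤ Wt k i := by
  have hC : i ∉ Cset := fun h => by have := Cset_pos h; omega
  have hD : i ∉ Dset := fun h => by have := Dset_pos h; omega
  unfold Wt
  rw [if_neg hC, if_neg hD]
  split_ifs <;> norm_num

lemma Wt_eq_zpow (k : ℕ) {i : ℤ} (hi : 0 ≤ i) : Wt k i = (2 : ℝ) ^ (eW (k : ℤ) i) := by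
  have hE : i ∉ Eset := fun h => by have := Eset_neg h; omega
  unfold Wt eW
  by_cases hC : i ∈ Cset
  · rw [if_pos hC, if_pos hC]
    by_cases hk : (k : ℤ) ≤ i
    · rw [if_pos hk, if_pos hk]; norm_num
    · rw [if_neg hk, if_neg hk]; norm_num
  · rw [if_neg hC, if_neg hC]
    by_cases hD : i ∈ Dset
    · rw [if_pos hD, if_pos hD]
      by_cases hk : (k : ℤ) ≤ i
      · rw [if_pos hk, if_pos hk]; norm_num
      · rw [if_neg hk, if_neg hk]; norm_num
    · rw [if_neg hD, if_neg hD, if_neg hE]; norm_num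

lemma prod_zpow_sum (g : ℤ → ℤ) (s : Finset ℤ) :
    ∏ i ∈ s, (2 : ℝ) ^ g i = 2 ^ (∑ i ∈ s, g i) := by
  induction s using Finset.cons_induction with
  | empty => simp
  | cons a s ha ih =>
      rw [Finset.prod_cons, Finset.sum_cons, ih, zpow_add₀ (by norm_num : (2:ℝ) ≠ 0)]

lemma four_mul_lt (m : ℕ) (hm : 5 ≤ m) : (4 * m + 4 : ℤ) < 2 ^ m := by
  induction m, hm using Nat.le_induction with
  | base => norm_num
  | succ n hn ih =>
      have h2 : (2:ℤ) ^ (n+1) = 2 * 2 ^ n := by rw [pow_succ]; ring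
      push_cast
      push_cast at ih
      omega

lemma geom_contra {j0 t1 t2 : ℤ} {s1 s2 : ℕ}
    (h11 : Lb s1 < t1) (h12 : t1 ≤ Rb s1)
    (h21 : Lb s2 < t2) (h22 : t2 ≤ Rb s2)
    (ht : t2 = 2 * t1 - j0)
    (ha : (j0.natAbs : ℤ) + 6 ≤ 2 * s1 + 1) (hb : (j0.natAbs : ℤ) + 6 ≤ 2 * s2 + 1) :
    False := by
  simp only [Lb, Rb, Pb] at h11 h12 h21 h22
  push_cast at h11 h12 h21 h22
  rcases le_or_gt s2 s1 with hle | hlt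
  · have hy : (2:ℤ) ^ (2*s2+1) ≤ 2 ^ (2*s1+1) := pow_le_pow_right₀ one_le_two (by omega)
    have h4 := four_mul_lt (2*s1) (by omega)
    push_cast at h4
    omega
  · have hx : (2:ℤ) ^ (2*s1+1+1) ≤ 2 ^ (2*s2) := pow_le_pow_right₀ one_le_two (by omega)
    have h4 := four_mul_lt (2*s2) (by omega)
    push_cast at h4
    omega

lemma prod_reindex (m : ℕ) (a : ℤ) (n : ℕ) :
    (∏ r ∈ Finset.range n, Wt m (a + n - 1 - r)) = ∏ i ∈ Finset.Ico a (a + n), Wt m i := by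
  refine Finset.prod_nbij' (fun r => a + n - 1 - r) (fun i => (a + n - 1 - i).toNat) ?_ ?_ ?_ ?_ ?_
  · intro r hr; rw [Finset.mem_range] at hr; rw [Finset.mem_Ico]; omega
  · intro i hi; rw [Finset.mem_Ico] at hi; rw [Finset.mem_range]; omega
  · intro r hr; rw [Finset.mem_range] at hr; omega
  · intro i hi; rw [Finset.mem_Ico] at hi; omega
  · intro r _; rfl

lemma prod_Ico_zero_le (k : ℕ) (j0 t : ℤ) (h0 : 0 ≤ t) (hj : j0 ≤ t) :
    (∏ i ∈ Finset.Ico (0:ℤ) t, Wt k i) ≤ 2 ^ j0.toNat * ∏ i ∈ Finset.Ico j0 t, Wt k i := by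
  rcases le_or_gt j0 0 with h | h
  · have hunion : Finset.Ico j0 (0:ℤ) ∪ Finset.Ico (0:ℤ) t = Finset.Ico j0 t :=
      Finset.Ico_union_Ico_eq_Ico h h0
    have hdisj := Finset.Ico_disjoint_Ico_consecutive j0 (0:ℤ) t
    have hsplit : (∏ i ∈ Finset.Ico j0 (0:ℤ), Wt k i) * ∏ i ∈ Finset.Ico (0:ℤ) t, Wt k i
        = ∏ i ∈ Finset.Ico j0 t, Wt k i := by
      rw [← Finset.prod_union hdisj, hunion]
    have h1 : (1:ℝ) ≤ ∏ i ∈ Finset.Ico j0 (0:ℤ), Wt k i := by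
      have h2 := Finset.prod_le_prod (s := Finset.Ico j0 (0:ℤ)) (f := fun _ => (1:ℝ))
        (g := fun i => Wt k i) (fun i _ => zero_le_one)
        (fun i hi => Wt_one_le_of_neg k (by rw [Finset.mem_Ico] at hi; exact hi.2))
      simpa using h2
    have hpos : 0 < ∏ i ∈ Finset.Ico (0:ℤ) t, Wt k i := Finset.prod_pos fun i _ => Wt_pos k i
    have htn : j0.toNat = 0 := by omega
    rw [htn, pow_zero, one_mul, ← hsplit]
    nlinarith [hpos, h1]
  · have hunion : Finset.Ico (0:ℤ) j0 ∪ Finset.Ico j0 t = Finset.Ico (0:ℤ) t :=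
      Finset.Ico_union_Ico_eq_Ico (le_of_lt h) hj
    have hdisj := Finset.Ico_disjoint_Ico_consecutive (0:ℤ) j0 t
    have hsplit : (∏ i ∈ Finset.Ico (0:ℤ) j0, Wt k i) * ∏ i ∈ Finset.Ico j0 t, Wt k i
        = ∏ i ∈ Finset.Ico (0:ℤ) t, Wt k i := by
      rw [← Finset.prod_union hdisj, hunion]
    have hb : (∏ i ∈ Finset.Ico (0:ℤ) j0, Wt k i) ≤ 2 ^ j0.toNat := by
      have h2 := Finset.prod_le_prod (s := Finset.Ico (0:ℤ) j0) (f := fun i => Wt k i)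
        (g := fun _ => (2:ℝ)) (fun i _ => le_of_lt (Wt_pos k i)) (fun i _ => Wt_le_two k i)
      rwa [Finset.prod_const, Int.card_Ico, sub_zero] at h2
    have hpos : 0 < ∏ i ∈ Finset.Ico j0 t, Wt k i := Finset.prod_pos fun i _ => Wt_pos k i
    rw [← hsplit]
    exact mul_le_mul_of_nonneg_right hb (le_of_lt hpos)

lemma prod_Ico_eq_zpow (k : ℕ) (t : ℤ) :
    (∏ i ∈ Finset.Ico (0:ℤ) t, Wt k i) = (2:ℝ) ^ Gf (k:ℤ) t := by
  unfold Gf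
  rw [← prod_zpow_sum]
  exact Finset.prod_congr rfl fun i hi => Wt_eq_zpow k (Finset.mem_Ico.1 hi).1

end Aux

set_option maxHeartbeats 1000000 in
set_option synthInstance.maxHeartbeats 200000 in
theorem stmt12
    {K : Type*} [NormedAddCommGroup K] [InnerProductSpace ℂ K] [CompleteSpace K]
    (f : ℕ → K) (hf : Orthonormal ℂ f)
    (hfdense : Dense (Submodule.span ℂ (Set.range f) : Set K))
    (A : ℤ → K →L[ℂ] K)
    (hAC : ∀ n ∈ Cset, ∀ k : ℕ, A n (f k) = if (k : ℤ) ≤ n then (2 : ℂ)⁻¹ • f k else f k)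
    (hAD : ∀ n ∈ Dset, ∀ k : ℕ, A n (f k) = if (k : ℤ) ≤ n then (2 : ℂ) • f k else f k)
    (hAE : ∀ n ∈ Eset, ∀ k : ℕ, A n (f k) = if (k : ℤ) ≤ -n then (2 : ℂ) • f k else f k)
    (hAelse : ∀ n : ℤ, n ∉ Cset ∪ Dset ∪ Eset → ∀ k : ℕ, A n (f k) = f k)
    (T : lp (fun _ : ℤ => K) 2 →L[ℂ] lp (fun _ : ℤ => K) 2)
    (hT : ∀ (x : lp (fun _ : ℤ => K) 2) (j : ℤ),
      (T x : ∀ _ : ℤ, K) j = A (j - 1) ((x : ∀ _ : ℤ, K) (j - 1))) :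
    ¬ ∃ x : lp (fun _ : ℤ => K) 2, Dense (Set.range fun n : ℕ =>
      ((T ^ n) x, (T ^ (2 * n)) x)) := by
  classical
  rintro ⟨x, hd⟩
  -- The operators `A i` act diagonally with weights `Wt`.
  have hA1 : ∀ (m : ℕ) (i : ℤ), A i (f m) = ((Wt m i : ℝ) : ℂ) • f m := by
    intro m i
    unfold Wt
    by_cases hC : i ∈ Cset
    · rw [if_pos hC, hAC i hC m]
      by_cases hk : (m : ℤ) ≤ i
      · rw [if_pos hk, if_pos hk]; norm_num
      · rw [if_neg hk, if_neg hk]; norm_num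
    · rw [if_neg hC]
      by_cases hD : i ∈ Dset
      · rw [if_pos hD, hAD i hD m]
        by_cases hk : (m : ℤ) ≤ i
        · rw [if_pos hk, if_pos hk]; norm_num
        · rw [if_neg hk, if_neg hk]; norm_num
      · rw [if_neg hD]
        by_cases hE : i ∈ Eset
        · rw [if_pos hE, hAE i hE m]
          by_cases hk : (m : ℤ) ≤ -i
          · rw [if_pos hk, if_pos hk]; norm_num
          · rw [if_neg hk, if_neg hk]; norm_num
        · have hnot : i ∉ Cset ∪ Dset ∪ Eset := by
            simp [Set.mem_union, hC, hD, hE]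
          rw [if_neg hE, hAelse i hnot]; norm_num
  have hinner : ∀ (m : ℕ) (i : ℤ) (y : K),
      (inner ℂ (f m) (A i y) : ℂ) = (Wt m i : ℂ) * inner ℂ (f m) y := by
    intro m i y
    have hfun : (innerSL ℂ (f m)).comp (A i) = ((Wt m i : ℝ) : ℂ) • innerSL ℂ (f m) := by
      apply ContinuousLinearMap.ext_on hfdense
      rintro v ⟨m', rfl⟩
      simp only [ContinuousLinearMap.coe_comp', Function.comp_apply,
        ContinuousLinearMap.smul_apply, innerSL_apply_apply, smul_eq_mul]
      rw [hA1 m' i, inner_smul_right]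
      rcases eq_or_ne m m' with rfl | hne
      · rfl
      · rw [orthonormal_iff_ite.mp hf m m', if_neg hne]
        simp
    have h := DFunLike.congr_fun hfun y
    simpa using h
  -- Coordinate formula for powers of T.
  have hcoord : ∀ (m n : ℕ) (j : ℤ),
      (inner ℂ (f m) (((T ^ n) x : ∀ _ : ℤ, K) j) : ℂ)
        = ((∏ r ∈ Finset.range n, Wt m (j - 1 - r) : ℝ) : ℂ)
            * inner ℂ (f m) ((x : ∀ _ : ℤ, K) (j - n)) := by
    intro m n
    induction n with
    | zero => intro j; simp
    | succ n ih =>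
        intro j
        have hstep : ((T ^ (n+1)) x : ∀ _ : ℤ, K) j
            = A (j - 1) (((T ^ n) x : ∀ _ : ℤ, K) (j - 1)) := by
          rw [pow_succ', ContinuousLinearMap.mul_apply, hT]
        rw [hstep, hinner, ih (j - 1)]
        have hprod : (∏ r ∈ Finset.range (n+1), Wt m (j - 1 - r))
            = Wt m (j - 1) * ∏ r ∈ Finset.range n, Wt m (j - 1 - 1 - r) := by
          rw [Finset.prod_range_succ', mul_comm]
          congr 1
          · congr 1
            push_cast
            ring
          · refine Finset.prod_congr rfl fun r _ => ?_
            congr 1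
            push_cast
            ring
        rw [hprod]
        have harg : j - 1 - (n : ℤ) = j - ((n+1 : ℕ) : ℤ) := by push_cast; ring
        rw [harg]
        push_cast
        ring
  -- x is nonzero
  have hxne : x ≠ 0 := by
    rintro rfl
    have hsub : (Set.range fun n : ℕ =>
        ((T ^ n) (0 : lp (fun _ : ℤ => K) 2), (T ^ (2*n)) (0 : lp (fun _ : ℤ => K) 2)))
        ⊆ {((0 : lp (fun _ : ℤ => K) 2), (0 : lp (fun _ : ℤ => K) 2))} := by
      rintro p ⟨n, rfl⟩
      simp
    have hcl := closure_minimal hsub isClosed_singleton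
    rw [hd.closure_eq] at hcl
    have hmem : ((lp.single 2 (0:ℤ) (f 0) : lp (fun _ : ℤ => K) 2), (0 : lp (fun _ : ℤ => K) 2))
        ∈ ({((0 : lp (fun _ : ℤ => K) 2), (0 : lp (fun _ : ℤ => K) 2))} :
          Set (lp (fun _ : ℤ => K) 2 × lp (fun _ : ℤ => K) 2)) := hcl trivial
    rw [Set.mem_singleton_iff, Prod.ext_iff] at hmem
    have h2 := congrArg (fun z : lp (fun _ : ℤ => K) 2 => (z : ∀ _ : ℤ, K) 0) hmem.1
    simp only [lp.single_apply_self, lp.coeFn_zero, Pi.zero_apply] at h2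
    exact hf.ne_zero 0 h2
  obtain ⟨j0, hj0⟩ : ∃ j : ℤ, (x : ∀ _ : ℤ, K) j ≠ 0 := by
    by_contra h
    push_neg at h
    exact hxne (lp.ext (funext h))
  obtain ⟨k, hk⟩ : ∃ k : ℕ, (inner ℂ (f k) ((x : ∀ _ : ℤ, K) j0) : ℂ) ≠ 0 := by
    by_contra h
    push_neg at h
    apply hj0
    have hfun : innerSL ℂ ((x : ∀ _ : ℤ, K) j0) = 0 := by
      apply ContinuousLinearMap.ext_on hfdense
      rintro v ⟨m, rfl⟩
      simp only [innerSL_apply_apply, ContinuousLinearMap.zero_apply]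
      rw [← inner_conj_symm, h m, map_zero]
    have h2 := DFunLike.congr_fun hfun ((x : ∀ _ : ℤ, K) j0)
    simpa [inner_self_eq_zero] using h2
  set δ := ‖(inner ℂ (f k) ((x : ∀ _ : ℤ, K) j0) : ℂ)‖ with hδdef
  have hδ : 0 < δ := norm_pos_iff.2 hk
  set J : ℕ := j0.natAbs with hJdef
  set M' : ℕ := J + 6 with hM'def
  set ε := δ * (2:ℝ) ^ (-((M' : ℤ) + J + 1)) with hεdef
  have hε : 0 < ε := by
    apply mul_pos hδ
    positivity
  set N : ℕ := J + 1 with hNdef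
  -- find a large n with both iterates small
  obtain ⟨n, hnN, hT1, hT2⟩ : ∃ n : ℕ, N ≤ n ∧ ‖(T ^ n) x‖ < ε ∧ ‖(T ^ (2*n)) x‖ < ε := by
    by_contra hcon
    push_neg at hcon
    have hpick : ∀ q : ℕ, ∃ nq : ℕ, ‖(T ^ nq) x‖ < min ε (1/(q+1))
        ∧ ‖(T ^ (2*nq)) x‖ < min ε (1/(q+1)) := by
      intro q
      have hr : 0 < min ε (1/(q+1) : ℝ) := lt_min hε (by positivity)
      obtain ⟨p, hp1, hp2⟩ := Metric.dense_iff.1 hd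
        ((0 : lp (fun _ : ℤ => K) 2), (0 : lp (fun _ : ℤ => K) 2)) _ hr
      obtain ⟨nq, rfl⟩ := hp2
      rw [Metric.mem_ball, Prod.dist_eq] at hp1
      refine ⟨nq, ?_, ?_⟩
      · have h1 := lt_of_le_of_lt (le_max_left _ _) hp1
        rwa [dist_comm, dist_zero_left] at h1
      · have h1 := lt_of_le_of_lt (le_max_right _ _) hp1
        rwa [dist_comm, dist_zero_left] at h1
    choose nf hn1 hn2 using hpick
    have hlt : ∀ q, nf q < N := by
      intro q
      by_contra hge
      push_neg at hge
      have h1 : ‖(T ^ (nf q)) x‖ < ε := lt_of_lt_of_le (hn1 q) (min_le_left _ _)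
      have h2 := hcon (nf q) hge h1
      exact absurd (lt_of_lt_of_le (hn2 q) (min_le_left _ _)) (not_lt.2 h2)
    obtain ⟨v, hv⟩ := Finite.exists_infinite_fiber (fun q : ℕ => (⟨nf q, hlt q⟩ : Fin N))
    have hvset : ((fun q : ℕ => (⟨nf q, hlt q⟩ : Fin N)) ⁻¹' {v}).Infinite :=
      Set.infinite_coe_iff.1 hv
    have hzero : (T ^ (v : ℕ)) x = 0 := by
      by_contra hnz
      have hpos : 0 < ‖(T ^ (v:ℕ)) x‖ := norm_pos_iff.2 hnz
      obtain ⟨q0, hq0⟩ := exists_nat_gt (1 / ‖(T ^ (v:ℕ)) x‖)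
      obtain ⟨q, hqmem, hqgt⟩ := hvset.exists_gt q0
      have hnfq : nf q = (v : ℕ) := congrArg Fin.val (hqmem : _)
      have hsm := lt_of_lt_of_le (hn1 q) (min_le_right _ _)
      rw [hnfq] at hsm
      have hlt2 : (1:ℝ)/(q+1) < ‖(T ^ (v:ℕ)) x‖ := by
        rw [div_lt_iff₀ (by positivity)]
        rw [div_lt_iff₀ hpos] at hq0
        have hq' : (q0 : ℝ) ≤ q := by exact_mod_cast le_of_lt hqgt
        nlinarith
      linarith
    have h0 := hcoord k (v : ℕ) (j0 + (v : ℕ))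
    rw [hzero] at h0
    simp only [lp.coeFn_zero, Pi.zero_apply, inner_zero_right] at h0
    have harg : (j0 + ((v:ℕ) : ℤ)) - ((v:ℕ) : ℤ) = j0 := by ring
    rw [harg] at h0
    have hppos : (0:ℝ) < ∏ r ∈ Finset.range (v:ℕ), Wt k (j0 + (v:ℕ) - 1 - r) :=
      Finset.prod_pos fun r _ => Wt_pos k _
    rcases mul_eq_zero.1 h0.symm with hc | hc
    · rw [Complex.ofReal_eq_zero] at hc
      exact absurd hc (ne_of_gt hppos)
    · exact hk hc
  -- the key exponent bound
  have hbound : ∀ mm : ℕ, N ≤ mm → ‖(T ^ mm) x‖ < ε →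
      Gf (k : ℤ) (j0 + mm) ≤ -((M' : ℤ) + 1) := by
    intro mm hmmN hnorm
    have hge : -j0 ≤ (mm : ℤ) := by
      have h2 : J = j0.natAbs := hJdef
      have h3 : N = J + 1 := hNdef
      have h4 : (J : ℤ) = |j0| := by rw [h2]; exact (Int.abs_eq_natAbs j0).symm
      have h5 : -j0 ≤ |j0| := neg_le_abs j0
      have h6 : (N : ℤ) ≤ (mm : ℤ) := by exact_mod_cast hmmN
      have h7 : (N : ℤ) = (J : ℤ) + 1 := by exact_mod_cast congrArg (Nat.cast : ℕ → ℤ) h3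
      omega
    have h0 := hcoord k mm (j0 + (mm : ℤ))
    have harg : (j0 + (mm : ℤ)) - (mm : ℤ) = j0 := by ring
    rw [harg] at h0
    have hle : ‖(inner ℂ (f k) (((T ^ mm) x : ∀ _ : ℤ, K) (j0 + mm)) : ℂ)‖ ≤ ‖(T ^ mm) x‖ := by
      calc ‖(inner ℂ (f k) (((T ^ mm) x : ∀ _ : ℤ, K) (j0 + mm)) : ℂ)‖
          ≤ ‖f k‖ * ‖((T ^ mm) x : ∀ _ : ℤ, K) (j0 + mm)‖ := norm_inner_le_norm _ _
        _ = ‖((T ^ mm) x : ∀ _ : ℤ, K) (j0 + mm)‖ := by rw [hf.1 k, one_mul]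
        _ ≤ ‖(T ^ mm) x‖ := lp.norm_apply_le_norm (by norm_num) _ _
    rw [h0, norm_mul, Complex.norm_real] at hle
    set Pr := ∏ r ∈ Finset.range mm, Wt k (j0 + (mm : ℤ) - 1 - r) with hPrdef
    have hPrpos : 0 < Pr := Finset.prod_pos fun r _ => Wt_pos k _
    have hPrε : Pr * δ < ε := by
      have : ‖Pr‖ = Pr := by rw [Real.norm_eq_abs, abs_of_pos hPrpos]
      rw [this] at hle
      exact lt_of_le_of_lt hle hnorm
    have hIco : (∏ i ∈ Finset.Ico j0 (j0 + (mm:ℤ)), Wt k i) < ε / δ := by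
      rw [← prod_reindex k j0 mm, ← hPrdef]
      rw [lt_div_iff₀ hδ]
      exact hPrε
    have hchain : (2:ℝ) ^ Gf (k : ℤ) (j0 + mm) < 2 ^ (j0.toNat : ℤ) * (ε / δ) := by
      calc (2:ℝ) ^ Gf (k : ℤ) (j0 + (mm:ℤ)) = ∏ i ∈ Finset.Ico (0:ℤ) (j0 + mm), Wt k i :=
            (prod_Ico_eq_zpow k _).symm
        _ ≤ 2 ^ j0.toNat * ∏ i ∈ Finset.Ico j0 (j0 + (mm:ℤ)), Wt k i :=
            prod_Ico_zero_le k j0 (j0 + mm) (by omega) (by omega)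
        _ < 2 ^ j0.toNat * (ε / δ) := by
            apply mul_lt_mul_of_pos_left hIco (by positivity)
        _ = 2 ^ (j0.toNat : ℤ) * (ε / δ) := by rw [zpow_natCast]
    have hεδ : ε / δ = (2:ℝ) ^ (-((M' : ℤ) + J + 1)) := by
      rw [hεdef, mul_comm, mul_div_assoc, div_self (ne_of_gt hδ), mul_one]
    rw [hεδ, ← zpow_add₀ (by norm_num : (2:ℝ) ≠ 0)] at hchain
    have hexp : (j0.toNat : ℤ) + -((M' : ℤ) + J + 1) ≤ -((M' : ℤ) + 1) := by
      have h2 : J = j0.natAbs := hJdef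
      omega
    have hchain2 : (2:ℝ) ^ Gf (k : ℤ) (j0 + mm) < 2 ^ (-((M' : ℤ) + 1)) :=
      lt_of_lt_of_le hchain (zpow_le_zpow_right₀ one_le_two hexp)
    have := (zpow_lt_zpow_iff_right₀ (by norm_num : (1:ℝ) < 2)).1 hchain2
    omega
  have hG1 := hbound n hnN hT1
  have hG2 := hbound (2*n) (by omega) hT2
  obtain ⟨s1, hs1a, hs1b, hs1c⟩ := windows (kz := (k:ℤ)) (t := j0 + n)
    (M := (M' : ℤ) + 1) (by omega) hG1
  obtain ⟨s2, hs2a, hs2b, hs2c⟩ := windows (kz := (k:ℤ)) (t := j0 + (2*n : ℕ))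
    (M := (M' : ℤ) + 1) (by omega) hG2
  have hts : (j0 + ((2*n : ℕ) : ℤ)) = 2 * (j0 + (n : ℤ)) - j0 := by push_cast; ring
  refine geom_contra hs1b hs1c hs2b hs2c hts ?_ ?_
  · rw [← hJdef]; omega
  · rw [← hJdef]; omega
end

section
/- Let V be a countably infinite set and par : V → V an injective map with no periodic points (the parent map of an infinite unrooted directed tree all of whose vertices have outdegree at most 1). Let 1 ≤ p < ∞ and let λ = (λ_v)_{v∈V} be positive reals with sup_{v∈V} λ_v/λ_{par(v)} < ∞ and sup_{v∈V} λ_v/λ_{par²(v)} < ∞, so that the shifts S₁ and S₂ defined by (S₁f)(v) = f(par(v)) and (S₂f)(v) = f(par²(v)) are bounded operators on L^p(V,λ). For m ≥ 1 and v ∈ V, write λ_{chi^m(v)} := λ_u if there exists (a necessarily unique) u ∈ V with par^m(u) = v, and λ_{chi^m(v)} := 0 otherwise. Then S₁ and S₂² are densely d-hypercyclic on L^p(V,λ) if and only if there exists a strictly increasing sequence (n_k)_{k≥1} of positive integers such that for every v ∈ V, as k → ∞: λ_{par^{n_k}(v)} → 0, λ_{par^{4 n_k}(v)} → 0, λ_{par^{3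 n_k}(v)} → 0, λ_{chi^{n_k}(v)} → 0, λ_{chi^{4 n_k}(v)} → 0, and λ_{chi^{3 n_k}(v)} → 0. -/
open Filter Topology
open scoped Classical

/-- `chiWeight par lam m v` is `λ_{chi^m(v)}`: the weight `lam u` of the (necessarily unique,
when `par` is injective) `u` with `par^[m] u = v`, and `0` if no such `u` exists. -/
noncomputable def chiWeight {V : Type*} (par : V → V) (lam : V → ℝ) (m : ℕ) (v : V) : ℝ :=
  if h : ∃ u, par^[m] u = v then lam (Classical.choose h) else 0

/-!
Write `T = S₁` and `R = S₂²`, so that `Tⁿ` and `Rⁿ` are composition with `par^[n]` and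
`par^[4n]`. Since `X` is a separable Baire space, Birkhoff's argument reduces the "if" direction
to hitting any three nonempty open sets `U, U₁, U₂` at a common time. Approximate points of them
by finitely supported `f, g₁, g₂` and put `z = f + z₁ + z₂`, where `z₁` and `z₂` push `g₁` and
`g₂` forward along `par^[n]` and `par^[4n]`, so that `Tⁿ z₁ = g₁` and `Rⁿ z₂ = g₂`. The other six
terms `z₁`, `z₂`, `Tⁿ f`, `Rⁿ f`, `Tⁿ z₂` (which is `g₂` pushed along `par^[3n]`) and
`Rⁿ z₁ = g₁ ∘ par^[3n]` have `p`-th power norms equal to finite sums against the six weights,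
so they vanish along `n_k`.

Conversely, pick `χ` with no zero coordinate and `x_k → χ`, `m_k → ∞` with `Tᵐᵏ x_k → χ` and
`Rᵐᵏ x_k → χ`. Each of the six weights is `lam (a_k)` for points `a_k → ∞` at which one of
`x_k, Tᵐᵏ x_k, Rᵐᵏ x_k` takes the value that another one takes at a fixed `w`; since that value
tends to `J χ w ≠ 0` while `‖J y a‖ * lam a ^ (1/p) ≤ ‖y‖`, the weight must tend to `0`.
-/

def WeightsVanishAlong {V : Type*} (par : V → V) (lam : V → ℝ) (n : ℕ → ℕ) : Prop :=
  ∀ v : V,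
    Tendsto (fun k => lam (par^[n k] v)) atTop (𝓝 0) ∧
    Tendsto (fun k => lam (par^[4 * n k] v)) atTop (𝓝 0) ∧
    Tendsto (fun k => lam (par^[3 * n k] v)) atTop (𝓝 0) ∧
    Tendsto (fun k => chiWeight par lam (n k) v) atTop (𝓝 0) ∧
    Tendsto (fun k => chiWeight par lam (4 * n k) v) atTop (𝓝 0) ∧
    Tendsto (fun k => chiWeight par lam (3 * n k) v) atTop (𝓝 0)

section Topology

variable {X Z : Type*} [TopologicalSpace X] [TopologicalSpace Z]

theorem dense_setOf_dense_range_of_transitive [BaireSpace X] [SecondCountableTopology Z]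
    {F : ℕ → X → Z} (hF : ∀ m, Continuous (F m))
    (htrans : ∀ U W, IsOpen U → IsOpen W → U.Nonempty → W.Nonempty →
      ∃ m, (U ∩ F m ⁻¹' W).Nonempty) :
    Dense {x | Dense (Set.range fun m => F m x)} := by
  open TopologicalSpace in
  set B := {b ∈ countableBasis Z | b.Nonempty}
  have hB : ∀ b ∈ B, IsOpen b := fun b hb => isOpen_of_mem_countableBasis hb.1
  have hsub : (⋂ b ∈ B, ⋃ m, F m ⁻¹' b) ⊆ {x | Dense (Set.range fun m => F m x)} := by
    intro x hx
    rw [Set.mem_ofPred_eq, (isBasis_countableBasis Z).dense_iff]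
    intro b hb hbne
    obtain ⟨m, hm⟩ := Set.mem_iUnion.1 (Set.mem_iInter₂.1 hx b ⟨hb, hbne⟩)
    exact ⟨F m x, hm, m, rfl⟩
  refine (dense_biInter_of_isOpen (fun b hb => isOpen_iUnion fun m => (hB b hb).preimage (hF m))
    ((countable_countableBasis Z).mono (Set.sep_subset _ _)) fun b hb => ?_).mono hsub
  rw [dense_iff_inter_open]
  intro U hU hUne
  obtain ⟨m, x, hxU, hxb⟩ := htrans U b hU (hB b hb) hUne hb.2
  exact ⟨x, hxU, Set.mem_iUnion.2 ⟨m, hxb⟩⟩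

/-- A dense orbit in a space without isolated points returns to every neighbourhood at
arbitrarily late times. -/
theorem exists_seq_tendsto_of_dense_setOf_dense_range [T1Space Z] [∀ z : Z, (𝓝[≠] z).NeBot]
    {F : ℕ → X → Z} (hD : Dense {x | Dense (Set.range fun m => F m x)})
    (χ : X) (ζ : Z) [(𝓝 χ).IsCountablyGenerated] [(𝓝 ζ).IsCountablyGenerated] :
    ∃ (x : ℕ → X) (m : ℕ → ℕ), (∀ k, k < m k) ∧ Tendsto x atTop (𝓝 χ) ∧
      Tendsto (fun k => F (m k) (x k)) atTop (𝓝 ζ) := by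
  obtain ⟨U, hU⟩ := (𝓝 χ).exists_antitone_basis
  obtain ⟨W, hW⟩ := (𝓝 ζ).exists_antitone_basis
  have hstep : ∀ k, ∃ x m, k < m ∧ x ∈ U k ∧ F m x ∈ W k := by
    intro k
    obtain ⟨x, hxU, hx⟩ := mem_closure_iff_nhds.1 (hD χ) (U k) (hU.mem k)
    have hlate : Dense (Set.range (fun m => F m x) \ (fun m => F m x) '' Set.Iic k) :=
      Dense.sdiff_finite hx ((Set.finite_Iic k).image _)
    obtain ⟨_, hzW, ⟨m, rfl⟩, hm⟩ := mem_closure_iff_nhds.1 (hlate ζ) (W k) (hW.mem k)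
    exact ⟨x, m, lt_of_not_ge fun hmk => hm ⟨m, hmk, rfl⟩, hxU, hzW⟩
  choose x m hm hxU hxW using hstep
  exact ⟨x, m, hm, hU.tendsto hxU, hW.tendsto hxW⟩

end Topology

section Iterate

variable {V ι : Type*} {par : V → V} {l : Filter ι} {k : ι → ℕ}

theorem iterate_four_mul_eq_comp (f : V → V) (m : ℕ) : f^[4 * m] = f^[m] ∘ f^[3 * m] := by
  rw [← Function.iterate_add]
  ring_nf

theorem iterate_apply_injective (hper : ∀ v : V, ∀ M : ℕ, 1 ≤ M → par^[M] v ≠ v) (v : V) :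
    Function.Injective fun m : ℕ => par^[m] v := by
  intro m m' h
  by_contra hne
  wlog hlt : m < m' generalizing m m'
  · exact this h.symm (Ne.symm hne) (by omega)
  apply hper (par^[m] v) (m' - m) (by omega)
  rw [← Function.iterate_add_apply, Nat.sub_add_cancel hlt.le]
  exact h.symm

theorem tendsto_iterate_apply_cofinite (hper : ∀ v : V, ∀ M : ℕ, 1 ≤ M → par^[M] v ≠ v)
    (hk : Tendsto k l atTop) (v : V) : Tendsto (fun j => par^[k j] v) l cofinite :=
  (iterate_apply_injective hper v).tendsto_cofinite.comp (Nat.cofinite_eq_atTop ▸ hk)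

theorem tendsto_cofinite_of_iterate_apply_eq (hper : ∀ v : V, ∀ M : ℕ, 1 ≤ M → par^[M] v ≠ v)
    (hk : Tendsto k l atTop) {u : ι → V} {w : V} (hu : ∀ᶠ j in l, par^[k j] (u j) = w) :
    Tendsto u l cofinite := by
  intro F hF
  rw [Filter.mem_map]
  have hfin : {m : ℕ | ∃ v ∈ Fᶜ, par^[m] v = w}.Finite :=
    (Set.Finite.biUnion (Filter.mem_cofinite.1 hF) fun v _ =>
      (Set.finite_singleton w).preimage (iterate_apply_injective hper v).injOn).subset
      fun m ⟨v, hv, hm⟩ => Set.mem_biUnion hv hm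
  have hlate : ∀ᶠ j in l, k j ∈ {m : ℕ | ∃ v ∈ Fᶜ, par^[m] v = w}ᶜ :=
    hk (Nat.cofinite_eq_atTop ▸ hfin.compl_mem_cofinite)
  filter_upwards [hlate, hu] with j hj hju
  by_contra hjF
  exact hj ⟨u j, hjF, hju⟩

end Iterate

section Extend

variable {α β E : Type*} [NormedAddCommGroup E] {p : ℝ}

theorem support_extend_zero_subset {φ : α → β} (hφ : Function.Injective φ) (g : α → E) :
    Function.support (Function.extend φ g 0) ⊆ φ '' Function.support g := by
  intro u hu
  by_cases h : ∃ w, φ w = u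
  · obtain ⟨w, rfl⟩ := h
    rw [Function.mem_support, hφ.extend_apply] at hu
    exact ⟨w, hu, rfl⟩
  · exact absurd (Function.extend_apply' g (0 : β → E) u h) hu

theorem extend_comp_apply_of_injective {f : β → β} {h : α → β} (hf : Function.Injective f)
    (hh : Function.Injective h) (g : α → E) (b : β) :
    Function.extend (f ∘ h) g 0 (f b) = Function.extend h g 0 b := by
  by_cases hb : ∃ a, h a = b
  · obtain ⟨a, rfl⟩ := hb
    rw [← Function.comp_apply (f := f), (hf.comp hh).extend_apply, hh.extend_apply]
  · have hfb : ¬∃ a, (f ∘ h) a = f b := fun ⟨a, ha⟩ => hb ⟨a, hf ha⟩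
    simp only [Function.extend_apply' _ _ _ hb, Function.extend_apply' _ _ _ hfb, Pi.zero_apply]

theorem tsum_norm_extend_rpow_mul (hp : p ≠ 0) {φ : α → β} (hφ : Function.Injective φ)
    (g : α → E) (μ : β → ℝ) :
    ∑' u, ‖Function.extend φ g 0 u‖ ^ p * μ u = ∑' w, ‖g w‖ ^ p * μ (φ w) := by
  rw [← hφ.tsum_eq]
  · simp only [hφ.extend_apply]
  · intro u hu
    by_contra h
    simp [Function.extend_apply' g (0 : β → E) u (by simpa using h), Real.zero_rpow hp] at hu

theorem tsum_norm_comp_rpow_mul {φ : α → β} (hφ : Function.Injective φ) (g : β → E)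
    (μ : α → ℝ) :
    ∑' v, ‖g (φ v)‖ ^ p * μ v = ∑' w, ‖g w‖ ^ p * Function.extend φ μ 0 w := by
  rw [← hφ.tsum_eq]
  · simp only [hφ.extend_apply]
  · intro w hw
    by_contra h
    simp [Function.extend_apply' μ (0 : β → ℝ) w (by simpa using h)] at hw

theorem tendsto_tsum_of_finite_support {ι : Type*} {l : Filter ι} (hp : p ≠ 0) {G : α → E}
    (hG : (Function.support G).Finite) {μ : ι → α → ℝ}
    (hμ : ∀ v, Tendsto (fun j => μ j v) l (𝓝 0)) :
    Tendsto (fun j => ∑' v, ‖G v‖ ^ p * μ j v) l (𝓝 0) := by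
  have hsupp : ∀ j, Function.support (fun v => ‖G v‖ ^ p * μ j v) ⊆ hG.toFinset := by
    intro j v hv
    rw [Set.Finite.coe_toFinset]
    by_contra h
    simp [Function.notMem_support.1 h, Real.zero_rpow hp] at hv
  simp_rw [tsum_eq_sum' (hsupp _)]
  simpa using tendsto_finsetSum hG.toFinset fun v _ => (hμ v).const_mul (‖G v‖ ^ p)

end Extend

theorem apply_pow_apply {V X : Type*} [NormedAddCommGroup X] [NormedSpace ℂ X]
    {J : X →ₗ[ℂ] (V → ℂ)} {T : X →L[ℂ] X} {φ : V → V} (hT : ∀ x v, J (T x) v = J x (φ v))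
    (n : ℕ) (x : X) (v : V) : J ((T ^ n) x) v = J x (φ^[n] v) := by
  induction n generalizing x with
  | zero => simp
  | succ n ih =>
    rw [pow_succ, mul_apply_eq_comp, ih, hT, Function.iterate_succ_apply']

theorem rpow_mul_rpow_one_div {a b p : ℝ} (ha : 0 ≤ a) (hb : 0 ≤ b) (hp : p ≠ 0) :
    (a ^ p * b) ^ (1 / p) = a * b ^ (1 / p) := by
  rw [Real.mul_rpow (Real.rpow_nonneg ha p) hb, ← Real.rpow_mul ha, mul_one_div_cancel hp,
    Real.rpow_one]

/-- `J` identifies `X` isometrically with the weighted space `L^p(V, lam)`. -/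
structure IsWeightedLp {V X : Type*} [NormedAddCommGroup X] [NormedSpace ℂ X]
    (J : X →ₗ[ℂ] (V → ℂ)) (p : ℝ) (lam : V → ℝ) : Prop where
  exponent_pos : 0 < p
  weight_pos : ∀ v, 0 < lam v
  injective : Function.Injective J
  summable : ∀ x, Summable fun v => ‖J x v‖ ^ p * lam v
  norm_eq : ∀ x, ‖x‖ = (∑' v, ‖J x v‖ ^ p * lam v) ^ (1 / p)
  exists_eq : ∀ g : V → ℂ, (Summable fun v => ‖g v‖ ^ p * lam v) → ∃ x, J x = g

namespace IsWeightedLp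

variable {V X ι : Type*} [NormedAddCommGroup X] [NormedSpace ℂ X]
  {J : X →ₗ[ℂ] (V → ℂ)} {p : ℝ} {lam : V → ℝ} {l : Filter ι}

theorem exists_apply_eq_of_finite (hX : IsWeightedLp J p lam) {g : V → ℂ}
    (hg : (Function.support g).Finite) : ∃ x, J x = g := by
  refine hX.exists_eq g (summable_of_hasFiniteSupport (hg.subset fun v hv => ?_))
  by_contra h
  simp [Function.notMem_support.1 h, Real.zero_rpow hX.exponent_pos.ne'] at hv

theorem norm_apply_mul_rpow_le (hX : IsWeightedLp J p lam) (x : X) (v : V) :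
    ‖J x v‖ * lam v ^ (1 / p) ≤ ‖x‖ := by
  have hp := hX.exponent_pos
  have hterm : ‖J x v‖ ^ p * lam v ≤ ∑' u, ‖J x u‖ ^ p * lam u :=
    (hX.summable x).le_tsum v fun u _ =>
      mul_nonneg (Real.rpow_nonneg (norm_nonneg _) p) (hX.weight_pos u).le
  calc ‖J x v‖ * lam v ^ (1 / p) = (‖J x v‖ ^ p * lam v) ^ (1 / p) :=
        (rpow_mul_rpow_one_div (norm_nonneg _) (hX.weight_pos v).le hp.ne').symm
    _ ≤ (∑' u, ‖J x u‖ ^ p * lam u) ^ (1 / p) :=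
        Real.rpow_le_rpow (mul_nonneg (Real.rpow_nonneg (norm_nonneg _) p)
          (hX.weight_pos v).le) hterm (by positivity)
    _ = ‖x‖ := (hX.norm_eq x).symm

theorem tendsto_zero_of_tendsto_tsum (hX : IsWeightedLp J p lam) {y : ι → X}
    (h : Tendsto (fun j => ∑' v, ‖J (y j) v‖ ^ p * lam v) l (𝓝 0)) : Tendsto y l (𝓝 0) := by
  have hp := hX.exponent_pos
  have h' := h.rpow_const (p := 1 / p) (Or.inr (by positivity))
  rw [Real.zero_rpow (one_div_pos.2 hp).ne'] at h'
  exact tendsto_zero_iff_norm_tendsto_zero.2 (h'.congr fun j => (hX.norm_eq (y j)).symm)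

theorem tendsto_apply_mul_rpow_of_tendsto_zero (hX : IsWeightedLp J p lam) {y : ι → X}
    (hy : Tendsto y l (𝓝 0)) (a : ι → V) :
    Tendsto (fun j => ‖J (y j) (a j)‖ * lam (a j) ^ (1 / p)) l (𝓝 0) :=
  squeeze_zero (fun _ => mul_nonneg (norm_nonneg _) (Real.rpow_nonneg (hX.weight_pos _).le _))
    (fun j => hX.norm_apply_mul_rpow_le (y j) (a j)) (tendsto_zero_iff_norm_tendsto_zero.1 hy)

theorem tendsto_apply (hX : IsWeightedLp J p lam) {y : ι → X} {x : X}
    (hy : Tendsto y l (𝓝 x)) (v : V) : Tendsto (fun j => J (y j) v) l (𝓝 (J x v)) := by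
  have h := hX.tendsto_apply_mul_rpow_of_tendsto_zero (tendsto_sub_nhds_zero_iff.2 hy)
    fun _ => v
  have hc : lam v ^ (1 / p) ≠ 0 := (Real.rpow_pos_of_pos (hX.weight_pos v) _).ne'
  have h' := h.div_const (lam v ^ (1 / p))
  rw [zero_div] at h'
  exact tendsto_iff_norm_sub_tendsto_zero.2
    (h'.congr fun j => by rw [map_sub, Pi.sub_apply, mul_div_cancel_right₀ _ hc])

theorem tendsto_apply_mul_rpow_cofinite (hX : IsWeightedLp J p lam) (x : X) :
    Tendsto (fun v => ‖J x v‖ * lam v ^ (1 / p)) cofinite (𝓝 0) := by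
  have hp := hX.exponent_pos
  have h := (hX.summable x).tendsto_cofinite_zero.rpow_const (p := 1 / p) (Or.inr (by positivity))
  rw [Real.zero_rpow (one_div_pos.2 hp).ne'] at h
  exact h.congr fun v => rpow_mul_rpow_one_div (norm_nonneg _) (hX.weight_pos v).le hp.ne'

theorem dense_setOf_finite_support (hX : IsWeightedLp J p lam) :
    Dense {x : X | (Function.support (J x)).Finite} := by
  intro x
  have htrunc : ∀ s : Finset V, ∃ y : X, J y = Set.indicator s (J x) := fun s =>
    hX.exists_apply_eq_of_finite (s.finite_toSet.subset Set.support_indicator_subset)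
  choose y hy using htrunc
  refine mem_closure_of_tendsto (f := y) (b := atTop) ?_ (Eventually.of_forall fun s => ?_)
  · rw [← tendsto_sub_nhds_zero_iff]
    refine hX.tendsto_zero_of_tendsto_tsum ?_
    have htail : ∀ s : Finset V, ∑' v, ‖J (y s - x) v‖ ^ p * lam v =
        ∑' v : {v // v ∉ s}, ‖J x v‖ ^ p * lam v := by
      intro s
      rw [show (∑' v : {v // v ∉ s}, ‖J x v‖ ^ p * lam v) =
          ∑' v, Set.indicator {v | v ∉ s} (fun v => ‖J x v‖ ^ p * lam v) v from
        tsum_subtype {v | v ∉ s} fun v => ‖J x v‖ ^ p * lam v]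
      congr 1
      ext v
      by_cases hv : v ∈ s <;>
        simp [hy, hv, Real.zero_rpow hX.exponent_pos.ne']
    simp_rw [htail]
    exact tendsto_tsum_compl_atTop_zero fun v => ‖J x v‖ ^ p * lam v
  · rw [Set.mem_ofPred_eq, hy]
    exact s.finite_toSet.subset Set.support_indicator_subset

theorem separableSpace [Countable V] (hX : IsWeightedLp J p lam) :
    TopologicalSpace.SeparableSpace X := by
  have hbasis : ∀ v, ∃ e : X, J e = Pi.single v 1 := fun v =>
    hX.exists_apply_eq_of_finite ((Set.finite_singleton v).subset Pi.support_single_subset)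
  choose e he using hbasis
  have hspan : {x : X | (Function.support (J x)).Finite} ⊆ Submodule.span ℂ (Set.range e) := by
    intro x hx
    have hsum : x = ∑ v ∈ hx.toFinset, J x v • e v := by
      apply hX.injective
      ext u
      by_cases hu : J x u = 0 <;> simp [he, Pi.single_apply, hu]
    rw [hsum]
    exact Submodule.sum_mem _ fun v _ => Submodule.smul_mem _ _ (Submodule.subset_span ⟨v, rfl⟩)
  rw [← TopologicalSpace.isSeparable_univ_iff]
  exact ((Set.countable_range e).isSeparable.span (R := ℂ)).closure.mono fun x _ =>
    closure_mono hspan (hX.dense_setOf_finite_support x)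

theorem exists_forall_apply_ne_zero [Countable V] (hX : IsWeightedLp J p lam) :
    ∃ χ : X, ∀ v, J χ v ≠ 0 := by
  obtain ⟨e, he⟩ := exists_injective_nat V
  have hc : ∀ v, 0 < (1 / 2 : ℝ) ^ e v / lam v := fun v => by
    have := hX.weight_pos v
    positivity
  set g : V → ℂ := fun v => (((1 / 2 : ℝ) ^ e v / lam v) ^ p⁻¹ : ℝ)
  have hg : ∀ v, ‖g v‖ ^ p * lam v = (1 / 2 : ℝ) ^ e v := fun v => by
    rw [Complex.norm_real, Real.norm_of_nonneg (Real.rpow_nonneg (hc v).le _),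
      Real.rpow_inv_rpow (hc v).le hX.exponent_pos.ne', div_mul_cancel₀ _ (hX.weight_pos v).ne']
  obtain ⟨χ, hχ⟩ := hX.exists_eq g (by simp_rw [hg]; exact summable_geometric_two.comp_injective he)
  exact ⟨χ, fun v => by
    rw [hχ]
    exact Complex.ofReal_ne_zero.2 (Real.rpow_pos_of_pos (hc v) _).ne'⟩

/-- The common value `J (y j) (a j)` tends to `J χ w ≠ 0`, while
`‖J (y j) (a j)‖ * lam (a j) ^ (1/p)` tends to `0` because `a j` leaves every finite set. -/
theorem tendsto_weight_zero_of_apply_eq (hX : IsWeightedLp J p lam) {χ : X} {w : V}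
    (hχ : J χ w ≠ 0) {y y' : ι → X} {a : ι → V} (hy : Tendsto y l (𝓝 χ))
    (hy' : Tendsto y' l (𝓝 χ)) (ha : Tendsto a l cofinite)
    (hcoord : ∀ᶠ j in l, J (y' j) w = J (y j) (a j)) :
    Tendsto (fun j => lam (a j)) l (𝓝 0) := by
  have hp := hX.exponent_pos
  have hχ' : ‖J χ w‖ ≠ 0 := norm_ne_zero_iff.2 hχ
  have hprod : Tendsto (fun j => ‖J (y j) (a j)‖ * lam (a j) ^ (1 / p)) l (𝓝 0) := by
    have hsum := (hX.tendsto_apply_mul_rpow_of_tendsto_zero (tendsto_sub_nhds_zero_iff.2 hy)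
      a).add ((hX.tendsto_apply_mul_rpow_cofinite χ).comp ha)
    rw [add_zero] at hsum
    refine squeeze_zero (fun j => mul_nonneg (norm_nonneg _)
      (Real.rpow_nonneg (hX.weight_pos _).le _)) (fun j => ?_) hsum
    rw [Function.comp_apply, ← add_mul, map_sub, Pi.sub_apply]
    exact mul_le_mul_of_nonneg_right (norm_le_norm_sub_add _ _)
      (Real.rpow_nonneg (hX.weight_pos _).le _)
  have hval : Tendsto (fun j => ‖J (y j) (a j)‖) l (𝓝 ‖J χ w‖) :=
    (hX.tendsto_apply hy' w).norm.congr' (hcoord.mono fun j hj => by rw [hj])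
  have hroot : Tendsto (fun j => lam (a j) ^ (1 / p)) l (𝓝 0) := by
    have h := hprod.div hval hχ'
    rw [zero_div] at h
    refine h.congr' ((hval.eventually_ne hχ').mono fun j hj => ?_)
    exact mul_div_cancel_left₀ _ hj
  have h := hroot.rpow_const (p := p) (Or.inr hp.le)
  rw [Real.zero_rpow hp.ne'] at h
  refine h.congr fun j => ?_
  rw [← Real.rpow_mul (hX.weight_pos _).le, one_div_mul_cancel hp.ne', Real.rpow_one]

variable {par : V → V} {T R : X →L[ℂ] X}

theorem tendsto_zero_of_apply_eq_extend (hX : IsWeightedLp J p lam) {φ : ι → V → V}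
    (hφ : ∀ j, Function.Injective (φ j)) {G : V → ℂ} (hG : (Function.support G).Finite)
    {y : ι → X} (hy : ∀ j, J (y j) = Function.extend (φ j) G 0)
    (hlim : ∀ v, Tendsto (fun j => lam (φ j v)) l (𝓝 0)) : Tendsto y l (𝓝 0) :=
  hX.tendsto_zero_of_tendsto_tsum <| by
    simp_rw [hy, tsum_norm_extend_rpow_mul hX.exponent_pos.ne' (hφ _)]
    exact tendsto_tsum_of_finite_support hX.exponent_pos.ne' hG hlim

theorem tendsto_zero_of_apply_eq_comp (hX : IsWeightedLp J p lam) {φ : ι → V → V}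
    (hφ : ∀ j, Function.Injective (φ j)) {G : V → ℂ} (hG : (Function.support G).Finite)
    {y : ι → X} (hy : ∀ j, J (y j) = G ∘ φ j)
    (hlim : ∀ v, Tendsto (fun j => Function.extend (φ j) lam 0 v) l (𝓝 0)) :
    Tendsto y l (𝓝 0) :=
  hX.tendsto_zero_of_tendsto_tsum <| by
    simp_rw [hy, Function.comp_apply, tsum_norm_comp_rpow_mul (hφ _)]
    exact tendsto_tsum_of_finite_support hX.exponent_pos.ne' hG hlim

theorem exists_apply_eq_extend (hX : IsWeightedLp J p lam) {φ : V → V}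
    (hφ : Function.Injective φ) {g : X} (hg : (Function.support (J g)).Finite) :
    ∃ z : X, J z = Function.extend φ (J g) 0 :=
  hX.exists_apply_eq_of_finite ((hg.image φ).subset (support_extend_zero_subset hφ _))

theorem exists_small_T_preimage (hX : IsWeightedLp J p lam) (hpar : Function.Injective par)
    (hT : ∀ n x v, J ((T ^ n) x) v = J x (par^[n] v))
    (hR : ∀ n x v, J ((R ^ n) x) v = J x (par^[4 * n] v)) {n : ℕ → ℕ}
    (hn : WeightsVanishAlong par lam n) {g : X} (hg : (Function.support (J g)).Finite) :
    ∃ z : ℕ → X, Tendsto z atTop (𝓝 0) ∧ (∀ k, (T ^ n k) (z k) = g) ∧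
      Tendsto (fun k => (R ^ n k) (z k)) atTop (𝓝 0) := by
  have hit : ∀ m, Function.Injective (par^[m]) := hpar.iterate
  choose z hz using fun k => hX.exists_apply_eq_extend (hit (n k)) hg
  refine ⟨z, hX.tendsto_zero_of_apply_eq_extend (fun _ => hit _) hg hz fun v => (hn v).1,
    fun k => hX.injective <| funext fun v => by rw [hT, hz, (hit _).extend_apply], ?_⟩
  refine hX.tendsto_zero_of_apply_eq_comp (φ := fun k => par^[3 * n k]) (fun _ => hit _) hg
    (fun k => funext fun v => ?_) fun v => (hn v).2.2.2.2.2
  rw [hR, hz, iterate_four_mul_eq_comp, Function.comp_apply, (hit _).extend_apply,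
    Function.comp_apply]

theorem exists_small_R_preimage (hX : IsWeightedLp J p lam) (hpar : Function.Injective par)
    (hT : ∀ n x v, J ((T ^ n) x) v = J x (par^[n] v))
    (hR : ∀ n x v, J ((R ^ n) x) v = J x (par^[4 * n] v)) {n : ℕ → ℕ}
    (hn : WeightsVanishAlong par lam n) {g : X} (hg : (Function.support (J g)).Finite) :
    ∃ z : ℕ → X, Tendsto z atTop (𝓝 0) ∧ Tendsto (fun k => (T ^ n k) (z k)) atTop (𝓝 0) ∧
      ∀ k, (R ^ n k) (z k) = g := by
  have hit : ∀ m, Function.Injective (par^[m]) := hpar.iterate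
  choose z hz using fun k => hX.exists_apply_eq_extend (hit (4 * n k)) hg
  refine ⟨z, hX.tendsto_zero_of_apply_eq_extend (fun _ => hit _) hg hz fun v => (hn v).2.1, ?_,
    fun k => hX.injective <| funext fun v => by rw [hR, hz, (hit _).extend_apply]⟩
  refine hX.tendsto_zero_of_apply_eq_extend (φ := fun k => par^[3 * n k]) (fun _ => hit _) hg
    (fun k => funext fun v => ?_) fun v => (hn v).2.2.1
  rw [hT, hz, iterate_four_mul_eq_comp, extend_comp_apply_of_injective (hit _) (hit _)]

theorem exists_tendsto_of_weightsVanishAlong (hX : IsWeightedLp J p lam)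
    (hpar : Function.Injective par) (hT : ∀ n x v, J ((T ^ n) x) v = J x (par^[n] v))
    (hR : ∀ n x v, J ((R ^ n) x) v = J x (par^[4 * n] v)) {n : ℕ → ℕ}
    (hn : WeightsVanishAlong par lam n) {f g₁ g₂ : X} (hf : (Function.support (J f)).Finite)
    (hg₁ : (Function.support (J g₁)).Finite) (hg₂ : (Function.support (J g₂)).Finite) :
    ∃ z : ℕ → X, Tendsto z atTop (𝓝 f) ∧ Tendsto (fun k => (T ^ n k) (z k)) atTop (𝓝 g₁) ∧
      Tendsto (fun k => (R ^ n k) (z k)) atTop (𝓝 g₂) := by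
  obtain ⟨z₁, hz₁, hTz₁, hRz₁⟩ := hX.exists_small_T_preimage hpar hT hR hn hg₁
  obtain ⟨z₂, hz₂, hTz₂, hRz₂⟩ := hX.exists_small_R_preimage hpar hT hR hn hg₂
  have hTf : Tendsto (fun k => (T ^ n k) f) atTop (𝓝 0) :=
    hX.tendsto_zero_of_apply_eq_comp (φ := fun k => par^[n k]) (fun _ => hpar.iterate _) hf
      (fun k => funext fun v => hT _ _ _) fun v => (hn v).2.2.2.1
  have hRf : Tendsto (fun k => (R ^ n k) f) atTop (𝓝 0) :=
    hX.tendsto_zero_of_apply_eq_comp (φ := fun k => par^[4 * n k]) (fun _ => hpar.iterate _) hf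
      (fun k => funext fun v => hR _ _ _) fun v => (hn v).2.2.2.2.1
  refine ⟨fun k => f + z₁ k + z₂ k, ?_, ?_, ?_⟩
  · simpa using (tendsto_const_nhds.add hz₁).add hz₂
  · simpa only [map_add, hTz₁, zero_add, add_zero] using
      (hTf.add (tendsto_const_nhds (x := g₁))).add hTz₂
  · simpa only [map_add, hRz₂, zero_add] using (hRf.add hRz₁).add (tendsto_const_nhds (x := g₂))

theorem dense_setOf_dense_orbit_of_weightsVanishAlong [Countable V] [CompleteSpace X]
    (hX : IsWeightedLp J p lam) (hpar : Function.Injective par)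
    (hT : ∀ n x v, J ((T ^ n) x) v = J x (par^[n] v))
    (hR : ∀ n x v, J ((R ^ n) x) v = J x (par^[4 * n] v)) {n : ℕ → ℕ}
    (hn : WeightsVanishAlong par lam n) :
    Dense {x : X | Dense (Set.range fun m : ℕ => ((T ^ m) x, (R ^ m) x))} := by
  have := hX.separableSpace
  have := UniformSpace.secondCountable_of_separable X
  refine dense_setOf_dense_range_of_transitive
    (fun m => (T ^ m).continuous.prodMk (R ^ m).continuous) ?_
  rintro U W hU hW ⟨f₀, hf₀⟩ ⟨⟨g₁₀, g₂₀⟩, hg₀⟩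
  obtain ⟨U₁, U₂, hU₁, hU₂, hg₁₀, hg₂₀, hUW⟩ := isOpen_prod_iff.1 hW g₁₀ g₂₀ hg₀
  have hD := hX.dense_setOf_finite_support
  obtain ⟨f, hf, hfU⟩ := hD.exists_mem_open hU ⟨f₀, hf₀⟩
  obtain ⟨g₁, hg₁, hg₁U⟩ := hD.exists_mem_open hU₁ ⟨g₁₀, hg₁₀⟩
  obtain ⟨g₂, hg₂, hg₂U⟩ := hD.exists_mem_open hU₂ ⟨g₂₀, hg₂₀⟩
  obtain ⟨z, hz, hTz, hRz⟩ := hX.exists_tendsto_of_weightsVanishAlong hpar hT hR hn hf hg₁ hg₂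
  obtain ⟨k, hzk, hTzk, hRzk⟩ := ((hz.eventually_mem (hU.mem_nhds hfU)).and
    ((hTz.eventually_mem (hU₁.mem_nhds hg₁U)).and (hRz.eventually_mem (hU₂.mem_nhds hg₂U)))).exists
  exact ⟨n k, z k, hzk, hUW ⟨hTzk, hRzk⟩⟩

theorem tendsto_weight_iterate_zero (hX : IsWeightedLp J p lam)
    (hper : ∀ v : V, ∀ M : ℕ, 1 ≤ M → par^[M] v ≠ v) {χ : X} {w : V} (hχ : J χ w ≠ 0)
    {k : ι → ℕ} (hk : Tendsto k l atTop) {y y' : ι → X} (hy : Tendsto y l (𝓝 χ))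
    (hy' : Tendsto y' l (𝓝 χ)) (hcoord : ∀ j, J (y' j) w = J (y j) (par^[k j] w)) :
    Tendsto (fun j => lam (par^[k j] w)) l (𝓝 0) :=
  hX.tendsto_weight_zero_of_apply_eq hχ hy hy' (tendsto_iterate_apply_cofinite hper hk w)
    (Eventually.of_forall hcoord)

theorem tendsto_chiWeight_zero (hX : IsWeightedLp J p lam) (hpar : Function.Injective par)
    (hper : ∀ v : V, ∀ M : ℕ, 1 ≤ M → par^[M] v ≠ v) {χ : X} {w : V} (hχ : J χ w ≠ 0)
    {k : ι → ℕ} (hk : Tendsto k l atTop) {y y' : ι → X} (hy : Tendsto y l (𝓝 χ))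
    (hy' : Tendsto y' l (𝓝 χ)) (hcoord : ∀ j u, par^[k j] u = w → J (y' j) w = J (y j) u) :
    Tendsto (fun j => chiWeight par lam (k j) w) l (𝓝 0) := by
  have : Nonempty V := ⟨w⟩
  choose! u hu using fun j (h : ∃ u, par^[k j] u = w) => h
  set s := {j | ∃ u, par^[k j] u = w}
  have hs : ∀ᶠ j in l ⊓ 𝓟 s, j ∈ s := mem_inf_of_right (mem_principal_self s)
  -- off `s` the point `w` has no preimage and the weight is `0`
  rw [← tendsto_inf_principal_nhds_iff_of_forall_eq (f := fun j => chiWeight par lam (k j) w)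
    (s := s) fun j hj => dif_neg hj]
  refine (hX.tendsto_weight_zero_of_apply_eq hχ (hy.mono_left inf_le_left)
    (hy'.mono_left inf_le_left)
    (tendsto_cofinite_of_iterate_apply_eq hper (hk.mono_left inf_le_left) (hs.mono hu))
    (hs.mono fun j hj => hcoord j _ (hu j hj))).congr' (hs.mono fun j hj => ?_)
  have h := (hpar.iterate (k j)).extend_apply lam 0 (u j)
  rw [hu j hj] at h
  exact h.symm

theorem weightsVanishAlong_of_tendsto (hX : IsWeightedLp J p lam)
    (hpar : Function.Injective par) (hper : ∀ v : V, ∀ M : ℕ, 1 ≤ M → par^[M] v ≠ v)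
    (hT : ∀ n x v, J ((T ^ n) x) v = J x (par^[n] v))
    (hR : ∀ n x v, J ((R ^ n) x) v = J x (par^[4 * n] v)) {χ : X} (hχ : ∀ v, J χ v ≠ 0)
    {x : ℕ → X} {n : ℕ → ℕ} (hn : Tendsto n atTop atTop) (hx : Tendsto x atTop (𝓝 χ))
    (hTx : Tendsto (fun k => (T ^ n k) (x k)) atTop (𝓝 χ))
    (hRx : Tendsto (fun k => (R ^ n k) (x k)) atTop (𝓝 χ)) :
    WeightsVanishAlong par lam n := by
  have h4 : Tendsto (fun k => 4 * n k) atTop atTop := tendsto_atTop_mono (fun k => by omega) hn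
  have h3 : Tendsto (fun k => 3 * n k) atTop atTop := tendsto_atTop_mono (fun k => by omega) hn
  intro w
  refine ⟨?_, ?_, ?_, ?_, ?_, ?_⟩
  · exact hX.tendsto_weight_iterate_zero hper (hχ w) hn hx hTx fun k => hT _ _ _
  · exact hX.tendsto_weight_iterate_zero hper (hχ w) h4 hx hRx fun k => hR _ _ _
  · exact hX.tendsto_weight_iterate_zero hper (hχ w) h3 hTx hRx fun k => by
      rw [hR, hT, iterate_four_mul_eq_comp, Function.comp_apply]
  · exact hX.tendsto_chiWeight_zero hpar hper (hχ w) hn hTx hx fun k u hu => by rw [← hu, hT]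
  · exact hX.tendsto_chiWeight_zero hpar hper (hχ w) h4 hRx hx fun k u hu => by rw [← hu, hR]
  · exact hX.tendsto_chiWeight_zero hpar hper (hχ w) h3 hRx hTx fun k u hu => by
      rw [← hu, hT, hR, iterate_four_mul_eq_comp, Function.comp_apply]

theorem exists_strictMono_weightsVanishAlong [Countable V] [Nonempty V]
    (hX : IsWeightedLp J p lam) (hpar : Function.Injective par)
    (hper : ∀ v : V, ∀ M : ℕ, 1 ≤ M → par^[M] v ≠ v)
    (hT : ∀ n x v, J ((T ^ n) x) v = J x (par^[n] v))
    (hR : ∀ n x v, J ((R ^ n) x) v = J x (par^[4 * n] v))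
    (hdense : Dense {x : X | Dense (Set.range fun m : ℕ => ((T ^ m) x, (R ^ m) x))}) :
    ∃ n : ℕ → ℕ, StrictMono n ∧ (∀ k, 1 ≤ n k) ∧ WeightsVanishAlong par lam n := by
  obtain ⟨χ, hχ⟩ := hX.exists_forall_apply_ne_zero
  have : Nontrivial X :=
    ⟨⟨χ, 0, fun h => hχ (Classical.arbitrary V) (by rw [h, map_zero, Pi.zero_apply])⟩⟩
  obtain ⟨x, m, hm, hx, hxm⟩ := exists_seq_tendsto_of_dense_setOf_dense_range hdense χ (χ, χ)
  obtain ⟨φ, hφ, hmφ⟩ :=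
    strictMono_subseq_of_tendsto_atTop (tendsto_atTop_mono (fun k => (hm k).le) tendsto_id)
  have hxm' := hxm.comp hφ.tendsto_atTop
  exact ⟨m ∘ φ, hmφ, fun k => Nat.one_le_of_lt (hm (φ k)),
    hX.weightsVanishAlong_of_tendsto hpar hper hT hR hχ hmφ.tendsto_atTop
      (hx.comp hφ.tendsto_atTop) hxm'.fst_nhds hxm'.snd_nhds⟩

end IsWeightedLp

theorem stmt13_general
    {V : Type*} [Countable V] [Infinite V]
    (par : V → V) (hpar : Function.Injective par)
    (hper : ∀ v : V, ∀ M : ℕ, 1 ≤ M → par^[M] v ≠ v)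
    (p : ℝ) (hp : 1 ≤ p)
    (lam : V → ℝ) (hlam : ∀ v, 0 < lam v)
    {X : Type*} [NormedAddCommGroup X] [NormedSpace ℂ X] [CompleteSpace X]
    (J : X →ₗ[ℂ] (V → ℂ)) (hJ : Function.Injective J)
    (hmem : ∀ x : X, Summable fun v => ‖J x v‖ ^ p * lam v)
    (hnorm : ∀ x : X, ‖x‖ = (∑' v, ‖J x v‖ ^ p * lam v) ^ (1 / p))
    (hsurj : ∀ g : V → ℂ, (Summable fun v => ‖g v‖ ^ p * lam v) → ∃ x : X, J x = g)
    (S₁ S₂ : X →L[ℂ] X)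
    (hS₁ : ∀ (x : X) (v : V), J (S₁ x) v = J x (par v))
    (hS₂ : ∀ (x : X) (v : V), J (S₂ x) v = J x (par (par v))) :
    Dense {x : X | Dense (Set.range fun n : ℕ => ((S₁ ^ n) x, ((S₂ ^ 2) ^ n) x))}
      ↔
    ∃ n : ℕ → ℕ, StrictMono n ∧ (∀ k, 1 ≤ n k) ∧
      ∀ v : V,
        Tendsto (fun k => lam (par^[n k] v)) atTop (𝓝 0) ∧
        Tendsto (fun k => lam (par^[4 * n k] v)) atTop (𝓝 0) ∧
        Tendsto (fun k => lam (par^[3 * n k] v)) atTop (𝓝 0) ∧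
        Tendsto (fun k => chiWeight par lam (n k) v) atTop (𝓝 0) ∧
        Tendsto (fun k => chiWeight par lam (4 * n k) v) atTop (𝓝 0) ∧
        Tendsto (fun k => chiWeight par lam (3 * n k) v) atTop (𝓝 0) := by
  have hX : IsWeightedLp J p lam := ⟨by linarith, hlam, hJ, hmem, hnorm, hsurj⟩
  have hT : ∀ n x v, J ((S₁ ^ n) x) v = J x (par^[n] v) := apply_pow_apply hS₁
  have hR : ∀ n x v, J (((S₂ ^ 2) ^ n) x) v = J x (par^[4 * n] v) := fun n x v => by
    rw [← pow_mul, apply_pow_apply (φ := par^[2]) hS₂, ← Function.iterate_mul]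
    ring_nf
  constructor
  · exact hX.exists_strictMono_weightsVanishAlong hpar hper hT hR
  · rintro ⟨n, -, -, hn⟩
    exact hX.dense_setOf_dense_orbit_of_weightsVanishAlong hpar hT hR hn

theorem stmt13
    {V : Type*} [Countable V] [Infinite V]
    (par : V → V) (hpar : Function.Injective par)
    (hper : ∀ v : V, ∀ M : ℕ, 1 ≤ M → par^[M] v ≠ v)
    (p : ℝ) (hp : 1 ≤ p)
    (lam : V → ℝ) (hlam : ∀ v, 0 < lam v)
    (hb1 : ∃ C : ℝ, ∀ v, lam v / lam (par v) ≤ C)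
    (hb2 : ∃ C : ℝ, ∀ v, lam v / lam (par (par v)) ≤ C)
    {X : Type*} [NormedAddCommGroup X] [NormedSpace ℂ X] [CompleteSpace X]
    (J : X →ₗ[ℂ] (V → ℂ)) (hJ : Function.Injective J)
    (hmem : ∀ x : X, Summable fun v => ‖J x v‖ ^ p * lam v)
    (hnorm : ∀ x : X, ‖x‖ = (∑' v, ‖J x v‖ ^ p * lam v) ^ (1 / p))
    (hsurj : ∀ g : V → ℂ, (Summable fun v => ‖g v‖ ^ p * lam v) → ∃ x : X, J x = g)
    (S₁ S₂ : X →L[ℂ] X)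
    (hS₁ : ∀ (x : X) (v : V), J (S₁ x) v = J x (par v))
    (hS₂ : ∀ (x : X) (v : V), J (S₂ x) v = J x (par (par v))) :
    Dense {x : X | Dense (Set.range fun n : ℕ => ((S₁ ^ n) x, ((S₂ ^ 2) ^ n) x))}
      ↔
    ∃ n : ℕ → ℕ, StrictMono n ∧ (∀ k, 1 ≤ n k) ∧
      ∀ v : V,
        Tendsto (fun k => lam (par^[n k] v)) atTop (𝓝 0) ∧
        Tendsto (fun k => lam (par^[4 * n k] v)) atTop (𝓝 0) ∧
        Tendsto (fun k => lam (par^[3 * n k] v)) atTop (𝓝 0) ∧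
        Tendsto (fun k => chiWeight par lam (n k) v) atTop (𝓝 0) ∧
        Tendsto (fun k => chiWeight par lam (4 * n k) v) atTop (𝓝 0) ∧
        Tendsto (fun k => chiWeight par lam (3 * n k) v) atTop (𝓝 0) :=
  stmt13_general par hpar hper p hp lam hlam J hJ hmem hnorm hsurj S₁ S₂ hS₁ hS₂
end

section
/- Let X be a separable infinite-dimensional complex Banach space, N ≥ 2, and let T₁, …, T_N be continuous linear operators on X. If T₁, …, T_N satisfy the d-Supercyclicity Criterion with respect to some strictly increasing sequence (n_k) of positive integers, then T₁, …, T_N have a dense set of d-supercyclic vectors, i.e. the set of x ∈ X such that {λ·(T₁^n x, …, T_N^n x) : λ ∈ ℂ, n ∈ ℕ} is dense in X^N is itself dense in X. -/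
open Filter Topology

/-! By a Baire category argument (Birkhoff's transitivity theorem) it suffices that for nonempty
open `U ⊆ X` and `V ⊆ X^N` some `z ∈ U` has a scaled orbit vector `λ • (T_l^m z)_l` in `V`.
Take `x ∈ U ∩ X₀` and `y ∈ V` with `y_l ∈ X_l`, put `w_k = ∑_j S_{j,k} y_j` and
`z_k = x + λ_k⁻¹ w_k`. Then `λ_k T_l^{n_k} z_k = λ_k T_l^{n_k} x + T_l^{n_k} w_k`, and condition (ii),
`‖T_l^{n_k} x‖ ‖w_k‖ → 0`, is exactly what allows a choice of `λ_k` for which both `λ_k T_l^{n_k} x`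
and `λ_k⁻¹ w_k` tend to `0`. -/

lemma exists_pos_mul_lt_and_lt_mul {a b ε : ℝ} (hb : 0 ≤ b) (hε : 0 < ε)
    (hab : a * b < ε ^ 2) : ∃ c > 0, a * c < ε ∧ b < c * ε := by
  rcases le_or_gt a 0 with ha | ha
  · refine ⟨b / ε + 1, by positivity, ?_, ?_⟩
    · nlinarith [show 0 < b / ε + 1 by positivity]
    · rw [add_mul, div_mul_cancel₀ b hε.ne']
      linarith
  · have hlt : b / ε < ε / a := by
      rw [div_lt_div_iff₀ hε ha]
      nlinarith
    obtain ⟨c, hbc, hca⟩ := exists_between hlt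
    refine ⟨c, (div_nonneg hb hε.le).trans_lt hbc, ?_, ?_⟩
    · rwa [lt_div_iff₀ ha, mul_comm] at hca
    · rwa [div_lt_iff₀ hε] at hbc

lemma exists_pos_tendsto_mul_and_div_of_tendsto_mul {a b : ℕ → ℝ} (ha : ∀ k, 0 ≤ a k)
    (hb : ∀ k, 0 ≤ b k) (hab : Tendsto (fun k => a k * b k) atTop (𝓝 0)) :
    ∃ c : ℕ → ℝ, (∀ k, 0 < c k) ∧ Tendsto (fun k => a k * c k) atTop (𝓝 0) ∧
      Tendsto (fun k => b k / c k) atTop (𝓝 0) := by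
  set ε : ℕ → ℝ := fun k => √(a k * b k + 1 / (k + 1))
  have hε_pos : ∀ k, 0 < ε k := fun k => Real.sqrt_pos.2 (by positivity [ha k, hb k])
  have hε : Tendsto ε atTop (𝓝 0) := by
    simpa [ε] using (hab.add tendsto_one_div_add_atTop_nhds_zero_nat).sqrt
  have hε_sq : ∀ k, a k * b k < ε k ^ 2 := fun k => by
    rw [Real.sq_sqrt (by positivity [ha k, hb k])]
    exact lt_add_of_pos_right _ (by positivity)
  choose c hc_pos hac hbc using fun k => exists_pos_mul_lt_and_lt_mul (hb k) (hε_pos k) (hε_sq k)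
  refine ⟨c, hc_pos, ?_, ?_⟩
  · exact squeeze_zero (fun k => mul_nonneg (ha k) (hc_pos k).le) (fun k => (hac k).le) hε
  · refine squeeze_zero (fun k => div_nonneg (hb k) (hc_pos k).le) (fun k => ?_) hε
    rw [div_le_iff₀ (hc_pos k), mul_comm]
    exact (hbc k).le

lemma exists_tendsto_smul_apply_of_tendsto_norm_mul {𝕜 X Y : Type*} [RCLike 𝕜]
    [NormedAddCommGroup X] [NormedSpace 𝕜 X] [NormedAddCommGroup Y] [NormedSpace 𝕜 Y]
    (Φ : ℕ → X →L[𝕜] Y) {x : X} {y : Y} {w : ℕ → X}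
    (hw : Tendsto (fun k => Φ k (w k)) atTop (𝓝 y))
    (hxw : Tendsto (fun k => ‖Φ k x‖ * ‖w k‖) atTop (𝓝 0)) :
    ∃ (c : ℕ → 𝕜) (z : ℕ → X), Tendsto z atTop (𝓝 x) ∧
      Tendsto (fun k => c k • Φ k (z k)) atTop (𝓝 y) := by
  obtain ⟨c, hc_pos, hc_x, hc_w⟩ := exists_pos_tendsto_mul_and_div_of_tendsto_mul
    (fun k => norm_nonneg (Φ k x)) (fun k => norm_nonneg (w k)) hxw
  have hnorm : ∀ k, ‖((c k : ℝ) : 𝕜)‖ = c k := fun k => by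
    rw [RCLike.norm_ofReal, abs_of_pos (hc_pos k)]
  have hx : Tendsto (fun k => ((c k : ℝ) : 𝕜) • Φ k x) atTop (𝓝 0) :=
    squeeze_zero_norm (fun k => by rw [norm_smul, hnorm, mul_comm]) hc_x
  have hw' : Tendsto (fun k => ((c k : ℝ) : 𝕜)⁻¹ • w k) atTop (𝓝 0) :=
    squeeze_zero_norm (fun k => by rw [norm_smul, norm_inv, hnorm, inv_mul_eq_div]) hc_w
  refine ⟨fun k => (c k : 𝕜), fun k => x + ((c k : ℝ) : 𝕜)⁻¹ • w k, ?_, ?_⟩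
  · simpa using tendsto_const_nhds.add hw'
  · have hne : ∀ k, ((c k : ℝ) : 𝕜) ≠ 0 := fun k => RCLike.ofReal_ne_zero.2 (hc_pos k).ne'
    simpa [smul_inv_smul₀ (hne _)] using hx.add hw

/-- Birkhoff's transitivity theorem, for a family of maps in place of the iterates of one map. -/
lemma dense_setOf_dense_range_of_dense_iUnion_preimage {ι X Y : Type*} [TopologicalSpace X]
    [BaireSpace X] [TopologicalSpace Y] [SecondCountableTopology Y] (F : ι → X → Y)
    (hF : ∀ p, Continuous (F p))
    (htrans : ∀ V : Set Y, IsOpen V → V.Nonempty → Dense (⋃ p, F p ⁻¹' V)) :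
    Dense {x | Dense (Set.range fun p => F p x)} := by
  obtain ⟨B, hB_count, hB_empty, hB⟩ := TopologicalSpace.exists_countable_basis Y
  have hG : Dense (⋂ V ∈ B, ⋃ p, F p ⁻¹' V) :=
    dense_biInter_of_isOpen (fun V hV => isOpen_iUnion fun p => (hB.isOpen hV).preimage (hF p))
      hB_count fun V hV =>
        htrans V (hB.isOpen hV) (Set.nonempty_iff_ne_empty.2 (ne_of_mem_of_not_mem hV hB_empty))
  refine hG.mono fun x hx => hB.dense_iff.2 fun V hV _ => ?_
  obtain ⟨p, hp⟩ := Set.mem_iUnion.1 (Set.mem_iInter₂.1 hx V hV)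
  exact ⟨F p x, hp, p, rfl⟩

namespace DSupCriterionWrt

variable {X : Type*} [NormedAddCommGroup X] [NormedSpace ℂ X] {N : ℕ} {T : Fin N → X →L[ℂ] X}
  {n : ℕ → ℕ}

lemma dense_iUnion_preimage (hcrit : DSupCriterionWrt T n) {V : Set (Fin N → X)}
    (hV : IsOpen V) (hV_ne : V.Nonempty) :
    Dense (⋃ p : ℂ × ℕ, (fun x => fun l => p.1 • (T l ^ p.2) x) ⁻¹' V) := by
  obtain ⟨X₀, Xs, S, hX₀, hXs, hST, hTS⟩ := hcrit
  refine dense_iff_inter_open.2 fun U hU hU_ne => ?_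
  obtain ⟨x, hxU, hx⟩ := hX₀.inter_open_nonempty U hU hU_ne
  obtain ⟨y, hyV, hy⟩ := (dense_pi Set.univ fun l _ => hXs l).inter_open_nonempty V hV hV_ne
  set Φ : ℕ → X →L[ℂ] (Fin N → X) := fun k => ContinuousLinearMap.pi fun l => T l ^ n k
  set w : ℕ → X := fun k => ∑ j, S j k (y j)
  have hw : Tendsto (fun k => Φ k (w k)) atTop (𝓝 y) := by
    refine tendsto_pi_nhds.2 fun l => ?_
    have := tendsto_finsetSum Finset.univ fun j _ => hST l j (y j) (hy j trivial)
    simp only [Finset.sum_sub_distrib, Finset.sum_ite_eq', Finset.mem_univ, if_true,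
      Finset.sum_const_zero] at this
    simpa [Φ, w] using tendsto_sub_nhds_zero_iff.1 this
  have hxw : Tendsto (fun k => ‖Φ k x‖ * ‖w k‖) atTop (𝓝 0) := by
    have hsum := tendsto_finsetSum Finset.univ fun l _ => hTS l x hx y fun j => hy j trivial
    rw [Finset.sum_const_zero] at hsum
    refine squeeze_zero (fun k => by positivity) (fun k => ?_) hsum
    rw [← Finset.sum_mul]
    refine mul_le_mul_of_nonneg_right ((pi_norm_le_iff_of_nonneg (by positivity)).2 fun l => ?_)
      (norm_nonneg _)
    exact Finset.single_le_sum (f := fun l => ‖(T l ^ n k) x‖) (fun _ _ => norm_nonneg _)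
      (Finset.mem_univ l)
  obtain ⟨c, z, hz, hcz⟩ := exists_tendsto_smul_apply_of_tendsto_norm_mul Φ hw hxw
  obtain ⟨k, hzU, hczV⟩ := ((hz.eventually (hU.mem_nhds hxU)).and
    (hcz.eventually (hV.mem_nhds hyV))).exists
  exact ⟨z k, hzU, Set.mem_iUnion.2 ⟨(c k, n k), hczV⟩⟩

end DSupCriterionWrt

theorem stmt16_general
    {X : Type*} [NormedAddCommGroup X] [NormedSpace ℂ X] [CompleteSpace X]
    [TopologicalSpace.SeparableSpace X]
    {N : ℕ} (T : Fin N → X →L[ℂ] X)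
    (n : ℕ → ℕ)
    (hcrit : DSupCriterionWrt T n) :
    Dense {x : X | Dense (Set.range fun p : ℂ × ℕ =>
      fun l : Fin N => p.1 • (((T l) ^ p.2) x))} :=
  dense_setOf_dense_range_of_dense_iUnion_preimage _
    (fun p => continuous_pi fun l => ((T l ^ p.2).continuous).const_smul p.1)
    fun _ => hcrit.dense_iUnion_preimage

theorem stmt16
    {X : Type*} [NormedAddCommGroup X] [NormedSpace ℂ X] [CompleteSpace X]
    [TopologicalSpace.SeparableSpace X] (hinfdim : ¬ FiniteDimensional ℂ X)
    {N : ℕ} (hN : 2 ≤ N) (T : Fin N → X →L[ℂ] X)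
    (n : ℕ → ℕ) (hn : StrictMono n) (hn1 : ∀ k, 1 ≤ n k)
    (hcrit : DSupCriterionWrt T n) :
    Dense {x : X | Dense (Set.range fun p : ℂ × ℕ =>
      fun l : Fin N => p.1 • (((T l) ^ p.2) x))} :=
  stmt16_general T n hcrit
end
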